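/- arXiv:1810.04977 — 6 statements merged into one kernel-verified Lean document; each statement's English description precedes it below -/
import Mathlib

section
/- Let M and N be indecomposable representations of Q, and let 0 → M →(ι) B →(π) N → 0 be a non-split short exact sequence of representations of Q (non-split means there is no morphism σ : N → B with π ∘ σ = id_N). If the linear map End(B) → Hom(M,N) given by φ ↦ π ∘ φ ∘ ι is the zero map, then B is indecomposable. -/
namespace QuivRep

variable (k : Type) [Field k] {V A : Type} (s t : A → V)

/-- `RSp k s t X Y` is R(N,M) = ⊕_{a∈Q_1} Hom_k(N_{s(a)}, M_{t(a)}) where the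
representation `N` has vertex spaces `X` and `M` has vertex spaces `Y`. -/
abbrev RSp (X Y : V → Type) [∀ q, AddCommGroup (X q)] [∀ q, Module k (X q)]
    [∀ q, AddCommGroup (Y q)] [∀ q, Module k (Y q)] : Type :=
  ∀ a : A, X (s a) →ₗ[k] Y (t a)

variable {X Y : V → Type}
  [∀ q, AddCommGroup (X q)] [∀ q, Module k (X q)]
  [∀ q, AddCommGroup (Y q)] [∀ q, Module k (Y q)]

/-- The linear map `d_{N,M}` whose cokernel is Ext(N,M). Here `Nm` are the arrow
maps of `N` (on spaces `X`) and `Mm` those of `M` (on spaces `Y`). -/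
def dMap (Nm : RSp k s t X X) (Mm : RSp k s t Y Y) :
    (∀ q, X q →ₗ[k] Y q) →ₗ[k] RSp k s t X Y where
  toFun f := fun a => (f (t a)).comp (Nm a) - (Mm a).comp (f (s a))
  map_add' f g := by
    funext a; ext x
    simp only [Pi.add_apply, LinearMap.add_comp, LinearMap.comp_add, LinearMap.sub_apply,
      LinearMap.add_apply, LinearMap.comp_apply]
    abel
  map_smul' c f := by
    funext a; ext x
    simp [smul_sub]

/-- `f : M → N` is a morphism of representations (`M` on spaces `X`, `N` on spaces `Y`). -/
def IsRHom (Mm : RSp k s t X X) (Nm : RSp k s t Y Y) (f : ∀ q, X q →ₗ[k] Y q) : Prop :=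
  ∀ a, (f (t a)).comp (Mm a) = (Nm a).comp (f (s a))

/-- Isomorphism of representations. -/
def RIso (Mm : RSp k s t X X) (Nm : RSp k s t Y Y) : Prop :=
  ∃ f : ∀ q, X q →ₗ[k] Y q, IsRHom k s t Mm Nm f ∧ ∀ q, Function.Bijective (f q)

/-- A family of submodules is a subrepresentation. -/
def IsSubRep (Mm : RSp k s t X X) (U : ∀ q, Submodule k (X q)) : Prop :=
  ∀ a, ∀ x ∈ U (s a), Mm a x ∈ U (t a)

/-- Indecomposability: nonzero, and no nontrivial internal direct sum decomposition. -/
def Indec (Mm : RSp k s t X X) : Prop :=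
  (∃ q, ∃ x : X q, x ≠ 0) ∧
  ∀ U W : ∀ q, Submodule k (X q), IsSubRep k s t Mm U → IsSubRep k s t Mm W →
    (∀ q, U q ⊓ W q = ⊥) → (∀ q, U q ⊔ W q = ⊤) →
    (∀ q, U q = ⊥) ∨ (∀ q, W q = ⊥)

/-- The middle term `B(f,λ,μ)` of the extension determined by `f ∈ R(N,M)`:
vertex spaces `Y q × X q`, arrow maps `[[Mm, f],[0, Nm]]`. -/
def BExt (Mm : RSp k s t Y Y) (Nm : RSp k s t X X) (f : RSp k s t X Y) :
    RSp k s t (fun q => Y q × X q) (fun q => Y q × X q) :=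
  fun a => LinearMap.prod
    ((Mm a).comp (LinearMap.fst k (Y (s a)) (X (s a))) +
      (f a).comp (LinearMap.snd k (Y (s a)) (X (s a))))
    ((Nm a).comp (LinearMap.snd k (Y (s a)) (X (s a))))

/-- `U` is strong: every deformation `M(λ)`, `λ ∈ U`, is indecomposable. -/
def Strong (Mm : RSp k s t X X) (U : Set (RSp k s t X X)) : Prop :=
  ∀ lam ∈ U, Indec k s t (Mm + lam)

/-- `U` is separating: `M(λ) ≅ M(μ)` implies `λ = μ` for `λ, μ ∈ U`. -/
def Separating (Mm : RSp k s t X X) (U : Set (RSp k s t X X)) : Prop :=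
  ∀ lam ∈ U, ∀ mu ∈ U, RIso k s t (Mm + lam) (Mm + mu) → lam = mu

/-- `End(M) = k·id`. -/
def EndTrivial (Mm : RSp k s t X X) : Prop :=
  ∀ f : ∀ q, X q →ₗ[k] X q, IsRHom k s t Mm Mm f → ∃ c : k, ∀ q, f q = c • LinearMap.id

/-- `Hom(M,N) = 0`. -/
def HomZero (Mm : RSp k s t X X) (Nm : RSp k s t Y Y) : Prop :=
  ∀ f : ∀ q, X q →ₗ[k] Y q, IsRHom k s t Mm Nm f → f = 0

end QuivRep


open QuivRep

/-! Split `B = U ⊕ W` as a representation and let `e` be the projection onto `U` along `W`.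
Since `π ∘ e ∘ ι = 0`, `e` preserves `ι M`, so it restricts to an idempotent endomorphism of `M`
and induces one of `N`; by indecomposability each of them is `0` or the identity. If both are `0`
then `e = 0`, and if both are the identity then `e = 1`. In the two mixed cases `e` or `1 - e`
kills `ι M` and induces the identity on `N`, so it descends to a section of `π`. -/

open LinearMap

theorem IsIdempotentElem.eq_zero_of_comp_eq_zero {R M N P : Type*} [Ring R]
    [AddCommGroup M] [Module R M] [AddCommGroup N] [Module R N] [AddCommGroup P] [Module R P]
    {ι : M →ₗ[R] N} {π : N →ₗ[R] P} (hex : ker π ≤ range ι) {e : Module.End R N}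
    (he : IsIdempotentElem e) (heι : e.comp ι = 0) (hπe : π.comp e = 0) : e = 0 := by
  ext x
  obtain ⟨m, hm⟩ := hex (show e x ∈ ker π from LinearMap.congr_fun hπe x)
  rw [← he.eq, Module.End.mul_apply, ← hm, ← comp_apply e ι, heι, LinearMap.zero_apply,
    LinearMap.zero_apply]

namespace QuivRep

variable {k : Type} [Field k] {V A : Type} {s t : A → V} {X Y Z : V → Type}
  [∀ q, AddCommGroup (X q)] [∀ q, Module k (X q)]
  [∀ q, AddCommGroup (Y q)] [∀ q, Module k (Y q)]
  [∀ q, AddCommGroup (Z q)] [∀ q, Module k (Z q)]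
  {Xm : RSp k s t X X} {Ym : RSp k s t Y Y} {Zm : RSp k s t Z Z}

theorem IsRHom.comp {f : ∀ q, X q →ₗ[k] Y q} {g : ∀ q, Y q →ₗ[k] Z q}
    (hf : IsRHom k s t Xm Ym f) (hg : IsRHom k s t Ym Zm g) :
    IsRHom k s t Xm Zm (fun q => (g q).comp (f q)) := fun a => by
  rw [LinearMap.comp_assoc, hf a, ← LinearMap.comp_assoc, hg a, LinearMap.comp_assoc]

theorem IsRHom.id_sub {e : ∀ q, X q →ₗ[k] X q} (he : IsRHom k s t Xm Xm e) :
    IsRHom k s t Xm Xm (fun q => LinearMap.id - e q) := fun a => by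
  rw [sub_comp, comp_sub, id_comp, comp_id, he a]

theorem exists_isRHom_lift_of_range_le {ι : ∀ q, X q →ₗ[k] Y q} (hι : IsRHom k s t Xm Ym ι)
    (hinj : ∀ q, Function.Injective (ι q)) {φ : ∀ q, Z q →ₗ[k] Y q}
    (hφ : IsRHom k s t Zm Ym φ) (hrange : ∀ q, range (φ q) ≤ range (ι q)) :
    ∃ ψ : ∀ q, Z q →ₗ[k] X q, IsRHom k s t Zm Xm ψ ∧ ∀ q, (ι q).comp (ψ q) = φ q := by
  choose r hr using fun q => (ι q).exists_leftInverse_of_injective (ker_eq_bot.2 (hinj q))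
  have hlift : ∀ q y, ι q (r q (φ q y)) = φ q y := fun q y => by
    obtain ⟨x, hx⟩ := hrange q ⟨y, rfl⟩
    rw [← hx, ← comp_apply (r q), hr q, id_apply]
  refine ⟨fun q => (r q).comp (φ q), fun a => ?_, fun q => LinearMap.ext (hlift q)⟩
  ext z
  apply hinj (t a)
  have hιa := LinearMap.congr_fun (hι a) (r (s a) (φ (s a) z))
  have hφa := LinearMap.congr_fun (hφ a) z
  simp only [comp_apply] at hιa hφa ⊢
  rw [hιa, hlift, hlift, hφa]

theorem exists_isRHom_descend_of_ker_le {π : ∀ q, Y q →ₗ[k] Z q} (hπ : IsRHom k s t Ym Zm π)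
    (hsurj : ∀ q, Function.Surjective (π q)) {φ : ∀ q, Y q →ₗ[k] X q}
    (hφ : IsRHom k s t Ym Xm φ) (hker : ∀ q, ker (π q) ≤ ker (φ q)) :
    ∃ χ : ∀ q, Z q →ₗ[k] X q, IsRHom k s t Zm Xm χ ∧ ∀ q, (χ q).comp (π q) = φ q := by
  choose g hg using fun q => (π q).exists_rightInverse_of_surjective (range_eq_top.2 (hsurj q))
  have hdesc : ∀ q y, φ q (g q (π q y)) = φ q y := fun q y => by
    have hy : g q (π q y) - y ∈ ker (π q) := by
      simp [mem_ker, ← comp_apply (π q) (g q), hg q]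
    simpa [sub_eq_zero] using hker q hy
  refine ⟨fun q => (φ q).comp (g q), fun a => ?_, fun q => LinearMap.ext (hdesc q)⟩
  ext z
  obtain ⟨y, rfl⟩ := hsurj (s a) z
  have hπa := LinearMap.congr_fun (hπ a) y
  have hφa := LinearMap.congr_fun (hφ a) y
  simp only [comp_apply] at hπa hφa ⊢
  rw [← hπa, hdesc, hdesc, hφa]

theorem Indec.eq_zero_or_eq_id_of_isIdempotentElem (hX : Indec k s t Xm)
    {e : ∀ q, X q →ₗ[k] X q} (he : IsRHom k s t Xm Xm e) (hidem : ∀ q, IsIdempotentElem (e q)) :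
    (∀ q, e q = 0) ∨ (∀ q, e q = LinearMap.id) := by
  have hrange : IsSubRep k s t Xm fun q => range (e q) := by
    rintro a _ ⟨x, rfl⟩
    exact ⟨Xm a x, LinearMap.congr_fun (he a) x⟩
  have hker : IsSubRep k s t Xm fun q => ker (e q) := fun a x hx => by
    simp only [mem_ker] at hx ⊢
    rw [← comp_apply (e _), he a, comp_apply, hx, map_zero]
  refine (hX.2 _ _ hrange hker (fun q => (hidem q).isCompl.inf_eq_bot)
    (fun q => (hidem q).isCompl.sup_eq_top)).imp (fun h q => range_eq_bot.1 (h q)) fun h q => ?_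
  ext x
  exact ker_eq_bot.1 (h q) (LinearMap.congr_fun (hidem q) x)

theorem indec_of_forall_isIdempotentElem (hne : ∃ q, ∃ x : X q, x ≠ 0)
    (h : ∀ e : ∀ q, X q →ₗ[k] X q, IsRHom k s t Xm Xm e → (∀ q, IsIdempotentElem (e q)) →
      (∀ q, e q = 0) ∨ (∀ q, e q = LinearMap.id)) :
    Indec k s t Xm := by
  refine ⟨hne, fun U W hU hW hinf hsup => ?_⟩
  have hUW : ∀ q, IsCompl (U q) (W q) := fun q =>
    ⟨disjoint_iff.2 (hinf q), codisjoint_iff.2 (hsup q)⟩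
  let e := fun q => (U q).projection (W q) (hUW q)
  have he : IsRHom k s t Xm Xm e := fun a => by
    ext x
    obtain ⟨u, hu, w, hw, rfl⟩ := Submodule.mem_sup.1 ((hsup (s a)).ge (Submodule.mem_top (x := x)))
    simp [e, Submodule.projection_apply_of_mem_left, Submodule.projection_apply_of_mem_right,
      hu, hw, hU a u hu, hW a w hw]
  refine (h e he fun q => Submodule.isIdempotentElem_projection _).imp
    (fun h0 q => eq_bot_iff.2 fun u hu => ?_) fun h1 q => eq_bot_iff.2 fun w hw => ?_
  · simpa [e, h0 q] using (Submodule.projection_apply_of_mem_left (hUW q) hu).symm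
  · simpa [e, h1 q] using Submodule.projection_apply_of_mem_right (hUW q) hw

theorem Indec.comp_eq_zero_or_eq_of_injective (hX : Indec k s t Xm) {ι : ∀ q, X q →ₗ[k] Y q}
    (hι : IsRHom k s t Xm Ym ι) (hinj : ∀ q, Function.Injective (ι q)) {e : ∀ q, Y q →ₗ[k] Y q}
    (he : IsRHom k s t Ym Ym e) (hidem : ∀ q, IsIdempotentElem (e q))
    (hrange : ∀ q, range ((e q).comp (ι q)) ≤ range (ι q)) :
    (∀ q, (e q).comp (ι q) = 0) ∨ (∀ q, (e q).comp (ι q) = ι q) := by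
  obtain ⟨ψ, hψ, hιψ⟩ := exists_isRHom_lift_of_range_le hι hinj (hι.comp he) hrange
  have hψidem : ∀ q, IsIdempotentElem (ψ q) := fun q => by
    ext x
    apply hinj q
    have h := LinearMap.congr_fun (hιψ q)
    simp only [comp_apply] at h
    rw [Module.End.mul_apply, h, h, ← Module.End.mul_apply, (hidem q).eq]
  refine (hX.eq_zero_or_eq_id_of_isIdempotentElem hψ hψidem).imp (fun h0 q => ?_) fun h1 q => ?_
  · rw [← hιψ, h0, comp_zero]
  · rw [← hιψ, h1, comp_id]

theorem Indec.comp_eq_zero_or_eq_of_surjective (hZ : Indec k s t Zm) {π : ∀ q, Y q →ₗ[k] Z q}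
    (hπ : IsRHom k s t Ym Zm π) (hsurj : ∀ q, Function.Surjective (π q)) {e : ∀ q, Y q →ₗ[k] Y q}
    (he : IsRHom k s t Ym Ym e) (hidem : ∀ q, IsIdempotentElem (e q))
    (hker : ∀ q, ker (π q) ≤ ker ((π q).comp (e q))) :
    (∀ q, (π q).comp (e q) = 0) ∨ (∀ q, (π q).comp (e q) = π q) := by
  obtain ⟨χ, hχ, hχπ⟩ := exists_isRHom_descend_of_ker_le hπ hsurj (he.comp hπ) hker
  have hχidem : ∀ q, IsIdempotentElem (χ q) := fun q => by
    ext z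
    obtain ⟨y, rfl⟩ := hsurj q z
    have h := LinearMap.congr_fun (hχπ q)
    simp only [comp_apply] at h
    rw [Module.End.mul_apply, h, h, ← Module.End.mul_apply, (hidem q).eq]
  refine (hZ.eq_zero_or_eq_id_of_isIdempotentElem hχ hχidem).imp (fun h0 q => ?_) fun h1 q => ?_
  · rw [← hχπ, h0, zero_comp]
  · rw [← hχπ, h1, id_comp]

theorem exists_section_of_comp_eq_zero_of_comp_eq {ι : ∀ q, X q →ₗ[k] Y q}
    {π : ∀ q, Y q →ₗ[k] Z q} (hπ : IsRHom k s t Ym Zm π) (hsurj : ∀ q, Function.Surjective (π q))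
    (hex : ∀ q, ker (π q) ≤ range (ι q)) {e : ∀ q, Y q →ₗ[k] Y q} (he : IsRHom k s t Ym Ym e)
    (heι : ∀ q, (e q).comp (ι q) = 0) (hπe : ∀ q, (π q).comp (e q) = π q) :
    ∃ σ : ∀ q, Z q →ₗ[k] Y q, IsRHom k s t Zm Ym σ ∧ ∀ q, (π q).comp (σ q) = LinearMap.id := by
  have hker : ∀ q, ker (π q) ≤ ker (e q) := fun q y hy => by
    obtain ⟨x, rfl⟩ := hex q hy
    exact LinearMap.congr_fun (heι q) x
  obtain ⟨σ, hσ, hσπ⟩ := exists_isRHom_descend_of_ker_le hπ hsurj he hker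
  refine ⟨σ, hσ, fun q => ?_⟩
  ext z
  obtain ⟨y, rfl⟩ := hsurj q z
  rw [comp_apply, ← comp_apply (σ q), hσπ, ← comp_apply, hπe, id_apply]

end QuivRep

theorem statement1_general {k : Type} [Field k] {V A : Type}
    (s t : A → V)
    {XM XB XN : V → Type}
    [∀ q, AddCommGroup (XM q)] [∀ q, Module k (XM q)]
    [∀ q, AddCommGroup (XB q)] [∀ q, Module k (XB q)]
    [∀ q, AddCommGroup (XN q)] [∀ q, Module k (XN q)]
    (Mm : RSp k s t XM XM) (Bm : RSp k s t XB XB) (Nm : RSp k s t XN XN)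
    (hM : Indec k s t Mm) (hN : Indec k s t Nm)
    (ι : ∀ q, XM q →ₗ[k] XB q) (π : ∀ q, XB q →ₗ[k] XN q)
    (hι : IsRHom k s t Mm Bm ι) (hπ : IsRHom k s t Bm Nm π)
    (hinj : ∀ q, Function.Injective (ι q))
    (hsurj : ∀ q, Function.Surjective (π q))
    (hex : ∀ q, LinearMap.range (ι q) = LinearMap.ker (π q))
    (hnonsplit : ¬ ∃ σ : ∀ q, XN q →ₗ[k] XB q,
      IsRHom k s t Nm Bm σ ∧ ∀ q, (π q).comp (σ q) = LinearMap.id)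
    (hzero : ∀ φ : ∀ q, XB q →ₗ[k] XB q, IsRHom k s t Bm Bm φ →
      ∀ q, (π q).comp ((φ q).comp (ι q)) = 0) :
    Indec k s t Bm := by
  have hker_le : ∀ q, ker (π q) ≤ range (ι q) := fun q => (hex q).ge
  refine indec_of_forall_isIdempotentElem ?_ fun e he hidem => ?_
  · obtain ⟨q, x, hx⟩ := hM.1
    exact ⟨q, ι q x, (map_ne_zero_iff _ (hinj q)).2 hx⟩
  have hrange : ∀ q, range ((e q).comp (ι q)) ≤ range (ι q) := by
    rintro q _ ⟨x, rfl⟩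
    rw [hex q]
    exact LinearMap.congr_fun (hzero e he q) x
  have hker : ∀ q, ker (π q) ≤ ker ((π q).comp (e q)) := fun q y hy => by
    obtain ⟨x, rfl⟩ := hker_le q hy
    exact LinearMap.congr_fun (hzero e he q) x
  have hsplit := fun f hf hfι hπf =>
    hnonsplit (exists_section_of_comp_eq_zero_of_comp_eq hπ hsurj hker_le (e := f) hf hfι hπf)
  rcases hM.comp_eq_zero_or_eq_of_injective hι hinj he hidem hrange with hι0 | hι1 <;>
    rcases hN.comp_eq_zero_or_eq_of_surjective hπ hsurj he hidem hker with hπ0 | hπ1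
  · exact Or.inl fun q => (hidem q).eq_zero_of_comp_eq_zero (hker_le q) (hι0 q) (hπ0 q)
  · exact (hsplit e he hι0 hπ1).elim
  · exact (hsplit _ he.id_sub (fun q => by rw [sub_comp, hι1, id_comp, sub_self])
      fun q => by rw [comp_sub, hπ0, comp_id, sub_zero]).elim
  · refine Or.inr fun q => (sub_eq_zero.1 ((hidem q).one_sub.eq_zero_of_comp_eq_zero (hker_le q)
      ?_ ?_)).symm
    · rw [sub_comp, hι1, Module.End.one_eq_id, id_comp, sub_self]
    · rw [comp_sub, hπ1, Module.End.one_eq_id, comp_id, sub_self]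

/-- Let `M`, `N` be indecomposable representations of `Q` and let
`0 → M →(ι) B →(π) N → 0` be a non-split short exact sequence of representations
(exactness taken vertexwise).  If the induced map `End(B) → Hom(M,N)`,
`φ ↦ π ∘ φ ∘ ι`, is the zero map, then `B` is indecomposable. -/
theorem statement1 {k : Type} [Field k] {V A : Type} [Fintype V] [Fintype A]
    (s t : A → V)
    {XM XB XN : V → Type}
    [∀ q, AddCommGroup (XM q)] [∀ q, Module k (XM q)] [∀ q, FiniteDimensional k (XM q)]
    [∀ q, AddCommGroup (XB q)] [∀ q, Module k (XB q)] [∀ q, FiniteDimensional k (XB q)]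
    [∀ q, AddCommGroup (XN q)] [∀ q, Module k (XN q)] [∀ q, FiniteDimensional k (XN q)]
    (Mm : RSp k s t XM XM) (Bm : RSp k s t XB XB) (Nm : RSp k s t XN XN)
    (hM : Indec k s t Mm) (hN : Indec k s t Nm)
    (ι : ∀ q, XM q →ₗ[k] XB q) (π : ∀ q, XB q →ₗ[k] XN q)
    (hι : IsRHom k s t Mm Bm ι) (hπ : IsRHom k s t Bm Nm π)
    (hinj : ∀ q, Function.Injective (ι q))
    (hsurj : ∀ q, Function.Surjective (π q))
    (hex : ∀ q, LinearMap.range (ι q) = LinearMap.ker (π q))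
    (hnonsplit : ¬ ∃ σ : ∀ q, XN q →ₗ[k] XB q,
      IsRHom k s t Nm Bm σ ∧ ∀ q, (π q).comp (σ q) = LinearMap.id)
    (hzero : ∀ φ : ∀ q, XB q →ₗ[k] XB q, IsRHom k s t Bm Bm φ →
      ∀ q, (π q).comp ((φ q).comp (ι q)) = 0) :
    Indec k s t Bm :=
  statement1_general s t Mm Bm Nm hM hN ι π hι hπ hinj hsurj hex hnonsplit hzero
end

section
/- Fix representations M, N of Q, a nonzero e ∈ R(N,M), and subsets U_{N,M} ⊆ R(N,M), U_M ⊆ R(M,M), U_N ⊆ R(N,N). Assume that U_M and U_N are both strong, and that W ⊆ U_{N,M} × U_M × U_N is a subset such that: (i) π_{N(μ),M(λ)}(e+τ) ≠ 0 in Ext(N(μ),M(λ)) for all (τ,λ,μ) ∈ W; and (ii) for every (τ,λ,μ) ∈ W and every endomorphism φ of B(e+τ,λ,μ), the composition (canonical projection onto N(μ)) ∘ φ ∘ (canonical inclusion of M(λ)) is the zero morphism M(λ) → N(μ). Then B(e+τ,λ,μ) is indecomposable for every (τ,λ,μ) ∈ W; equivalently, the corresponding subset (e,0,0)+W of R(B,B),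 for B = B(e,0,0), is strong. -/
/-!
Write `f = e + τ`. By hypothesis (ii) every endomorphism of `B = B(f, λ, μ)` is upper triangular
`[[α, β], [0, δ]]` with `α ∈ End M(λ)` and `δ ∈ End N(μ)`. For an idempotent one, `α` and `δ` are
idempotent, hence each `0` or `1` since `M(λ)` and `N(μ)` are indecomposable, and `β = αβ + βδ`.
If `α = δ` this forces `β = 0`, so the idempotent is `0` or `1`. If `α ≠ δ`, the morphism equation
`d(β) = fδ - αf` reads `f = ±d(β)`, so `f` vanishes in `Ext(N(μ), M(λ))`, contrary to (i).
-/

namespace QuivRep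

variable {k : Type} [Field k] {V A : Type} {s t : A → V} {X Y : V → Type}
  [∀ q, AddCommGroup (X q)] [∀ q, Module k (X q)]
  [∀ q, AddCommGroup (Y q)] [∀ q, Module k (Y q)]

section Idempotents

variable {Mm : RSp k s t X X}

theorem isSubRep_range {φ : ∀ q, Module.End k (X q)} (hφ : IsRHom k s t Mm Mm φ) :
    IsSubRep k s t Mm fun q => LinearMap.range (φ q) := by
  rintro a _ ⟨x, rfl⟩
  exact ⟨Mm a x, LinearMap.congr_fun (hφ a) x⟩

theorem isSubRep_ker {φ : ∀ q, Module.End k (X q)} (hφ : IsRHom k s t Mm Mm φ) :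
    IsSubRep k s t Mm fun q => LinearMap.ker (φ q) := by
  intro a x hx
  rw [LinearMap.mem_ker] at hx ⊢
  rw [← LinearMap.comp_apply, hφ a, LinearMap.comp_apply, hx, map_zero]

theorem isRHom_projection {U W : ∀ q, Submodule k (X q)} (hU : IsSubRep k s t Mm U)
    (hW : IsSubRep k s t Mm W) (hUW : ∀ q, IsCompl (U q) (W q)) :
    IsRHom k s t Mm Mm fun q => (U q).projection (W q) (hUW q) := by
  intro a
  ext x
  obtain ⟨u, hu, w, hw, rfl⟩ :=
    Submodule.mem_sup.mp ((hUW (s a)).sup_eq_top ▸ Submodule.mem_top : x ∈ U (s a) ⊔ W (s a))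
  simp [Submodule.projection_apply_of_mem_left, Submodule.projection_apply_of_mem_right, hu, hw,
    hU a u hu, hW a w hw]

theorem Indec.eq_zero_or_eq_one_of_isIdempotentElem (hM : Indec k s t Mm)
    {φ : ∀ q, Module.End k (X q)} (hφ : IsRHom k s t Mm Mm φ) (hidem : IsIdempotentElem φ) :
    φ = 0 ∨ φ = 1 := by
  have hidem_q (q : V) : IsIdempotentElem (φ q) := congr_fun hidem q
  have hcompl (q : V) := LinearMap.IsIdempotentElem.isCompl (hidem_q q)
  rcases hM.2 _ _ (isSubRep_range hφ) (isSubRep_ker hφ) (fun q => (hcompl q).inf_eq_bot)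
    (fun q => (hcompl q).sup_eq_top) with h | h
  · exact .inl <| funext fun q => LinearMap.range_eq_bot.mp (h q)
  · refine .inr <| funext fun q => LinearMap.ext fun x => ?_
    exact LinearMap.ker_eq_bot.mp (h q) (LinearMap.congr_fun (hidem_q q) x)

theorem indec_of_isIdempotentElem (hne : ∃ q, ∃ x : X q, x ≠ 0)
    (h : ∀ φ : ∀ q, Module.End k (X q), IsRHom k s t Mm Mm φ → IsIdempotentElem φ →
      φ = 0 ∨ φ = 1) :
    Indec k s t Mm := by
  refine ⟨hne, fun U W hU hW hinf hsup => ?_⟩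
  have hUW (q : V) : IsCompl (U q) (W q) :=
    ⟨disjoint_iff.mpr (hinf q), codisjoint_iff.mpr (hsup q)⟩
  rcases h _ (isRHom_projection hU hW hUW)
    (funext fun q => Submodule.isIdempotentElem_projection (hUW q)) with h0 | h1
  · refine .inl fun q => ?_
    rw [← Submodule.range_projection (hUW q), congr_fun h0 q]
    exact LinearMap.range_zero
  · refine .inr fun q => ?_
    rw [← Submodule.ker_projection (hUW q), congr_fun h1 q]
    exact LinearMap.ker_id

end Idempotents

section Extension

variable {Lm : RSp k s t Y Y} {Nn : RSp k s t X X} {f : RSp k s t X Y}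

@[simp]
theorem bExt_apply (a : A) (y : Y (s a)) (x : X (s a)) :
    BExt k s t Lm Nn f a (y, x) = (Lm a y + f a x, Nn a x) :=
  rfl

def upperTriangular (α : ∀ q, Module.End k (Y q)) (β : ∀ q, X q →ₗ[k] Y q)
    (δ : ∀ q, Module.End k (X q)) : ∀ q, Module.End k (Y q × X q) :=
  fun q => ((α q).comp (LinearMap.fst k _ _) + (β q).comp (LinearMap.snd k _ _)).prod
    ((δ q).comp (LinearMap.snd k _ _))

@[simp]
theorem upperTriangular_apply (α : ∀ q, Module.End k (Y q)) (β : ∀ q, X q →ₗ[k] Y q)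
    (δ : ∀ q, Module.End k (X q)) (q : V) (y : Y q) (x : X q) :
    upperTriangular α β δ q (y, x) = (α q y + β q x, δ q x) :=
  rfl

theorem exists_eq_upperTriangular {φ : ∀ q, Module.End k (Y q × X q)}
    (h : ∀ q, LinearMap.snd k (Y q) (X q) ∘ₗ φ q ∘ₗ LinearMap.inl k (Y q) (X q) = 0) :
    ∃ α β δ, φ = upperTriangular α β δ := by
  refine ⟨fun q => LinearMap.fst k _ _ ∘ₗ φ q ∘ₗ LinearMap.inl k _ _,
    fun q => LinearMap.fst k _ _ ∘ₗ φ q ∘ₗ LinearMap.inr k _ _,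
    fun q => LinearMap.snd k _ _ ∘ₗ φ q ∘ₗ LinearMap.inr k _ _, funext fun q => ?_⟩
  apply LinearMap.ext
  rintro ⟨y, x⟩
  have hφ : φ q (y, x) = φ q (y, 0) + φ q (0, x) := by
    rw [← map_add, Prod.mk_add_mk, add_zero, zero_add]
  have h0 : (φ q (y, 0)).2 = 0 := LinearMap.congr_fun (h q) y
  ext <;> simp [hφ, h0]

theorem upperTriangular_zero :
    upperTriangular (0 : ∀ q, Module.End k (Y q)) 0 (0 : ∀ q, Module.End k (X q)) = 0 := by
  funext q
  apply LinearMap.ext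
  rintro ⟨y, x⟩
  simp

theorem upperTriangular_one :
    upperTriangular (1 : ∀ q, Module.End k (Y q)) 0 (1 : ∀ q, Module.End k (X q)) = 1 := by
  funext q
  apply LinearMap.ext
  rintro ⟨y, x⟩
  simp

theorem IsIdempotentElem.upperTriangular {α : ∀ q, Module.End k (Y q)}
    {β : ∀ q, X q →ₗ[k] Y q} {δ : ∀ q, Module.End k (X q)}
    (h : IsIdempotentElem (upperTriangular α β δ)) :
    IsIdempotentElem α ∧ IsIdempotentElem δ ∧ ∀ q, α q ∘ₗ β q + β q ∘ₗ δ q = β q := by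
  have h' (q : V) (y : Y q) (x : X q) := LinearMap.congr_fun (congr_fun h q) (y, x)
  simp only [Pi.mul_apply, Module.End.mul_apply, upperTriangular_apply, Prod.mk.injEq] at h'
  refine ⟨funext fun q => LinearMap.ext fun y => ?_, funext fun q => LinearMap.ext fun x => ?_,
    fun q => LinearMap.ext fun x => ?_⟩
  · simpa using (h' q y 0).1
  · simpa using (h' q 0 x).2
  · simpa using (h' q 0 x).1

theorem IsRHom.upperTriangular {α : ∀ q, Module.End k (Y q)} {β : ∀ q, X q →ₗ[k] Y q}
    {δ : ∀ q, Module.End k (X q)}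
    (h : IsRHom k s t (BExt k s t Lm Nn f) (BExt k s t Lm Nn f) (upperTriangular α β δ)) :
    IsRHom k s t Lm Lm α ∧ IsRHom k s t Nn Nn δ ∧
      dMap k s t Nn Lm β = fun a => f a ∘ₗ δ (s a) - α (t a) ∘ₗ f a := by
  have h' (a : A) (y : Y (s a)) (x : X (s a)) := LinearMap.congr_fun (h a) (y, x)
  simp only [LinearMap.comp_apply, upperTriangular_apply, bExt_apply, Prod.mk.injEq,
    map_add] at h'
  refine ⟨fun a => LinearMap.ext fun y => ?_, fun a => LinearMap.ext fun x => ?_,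
    funext fun a => LinearMap.ext fun x => ?_⟩
  · simpa using (h' a y 0).1
  · simpa using (h' a 0 x).2
  · have hx := (h' a 0 x).1
    simp only [map_zero, zero_add] at hx
    simp only [dMap, LinearMap.coe_mk, AddHom.coe_mk, LinearMap.sub_apply, LinearMap.comp_apply]
    rw [sub_eq_sub_iff_add_eq_add, add_comm, hx, add_comm]

theorem indec_bExt (hL : Indec k s t Lm) (hN : Indec k s t Nn)
    (hf : f ∉ LinearMap.range (dMap k s t Nn Lm))
    (hupper : ∀ φ : ∀ q, Module.End k (Y q × X q),
      IsRHom k s t (BExt k s t Lm Nn f) (BExt k s t Lm Nn f) φ →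
      ∀ q, LinearMap.snd k (Y q) (X q) ∘ₗ φ q ∘ₗ LinearMap.inl k (Y q) (X q) = 0) :
    Indec k s t (BExt k s t Lm Nn f) := by
  obtain ⟨q, y, hy⟩ := hL.1
  refine indec_of_isIdempotentElem ⟨q, (y, 0), by simpa⟩ fun φ hφ hidem => ?_
  obtain ⟨α, β, δ, rfl⟩ := exists_eq_upperTriangular (hupper φ hφ)
  obtain ⟨hα, hδ, hβ⟩ := hφ.upperTriangular
  obtain ⟨iα, iδ, iβ⟩ := IsIdempotentElem.upperTriangular hidem
  rcases hL.eq_zero_or_eq_one_of_isIdempotentElem hα iα with rfl | rfl <;>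
    rcases hN.eq_zero_or_eq_one_of_isIdempotentElem hδ iδ with rfl | rfl
  · obtain rfl : β = 0 := funext fun q => by simpa using (iβ q).symm
    exact .inl upperTriangular_zero
  · exact absurd ⟨β, by simpa [Module.End.one_eq_id] using hβ⟩ hf
  · exact absurd ⟨-β, by rw [map_neg, hβ]; ext; simp [Module.End.one_eq_id]⟩ hf
  · obtain rfl : β = 0 := funext fun q => by simpa [Module.End.one_eq_id] using iβ q
    exact .inr upperTriangular_one

end Extension

end QuivRep

open QuivRep

variable {k : Type} [Field k] {V A : Type} [Fintype V] [Fintype A] (s t : A → V)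
variable {X Y : V → Type}
  [∀ q, AddCommGroup (X q)] [∀ q, Module k (X q)] [∀ q, FiniteDimensional k (X q)]
  [∀ q, AddCommGroup (Y q)] [∀ q, Module k (Y q)] [∀ q, FiniteDimensional k (Y q)]

theorem statement2
    (Mm : RSp k s t Y Y) (Nm : RSp k s t X X)
    (e : RSp k s t X Y)
    (UNM : Set (RSp k s t X Y)) (UM : Set (RSp k s t Y Y)) (UN : Set (RSp k s t X X))
    (hUM : Strong k s t Mm UM) (hUN : Strong k s t Nm UN)
    (W : Set ((RSp k s t X Y) × (RSp k s t Y Y) × (RSp k s t X X)))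
    (hW : W ⊆ UNM ×ˢ (UM ×ˢ UN))
    (hnonzero : ∀ p ∈ W,
      e + p.1 ∉ LinearMap.range (dMap k s t (Nm + p.2.2) (Mm + p.2.1)))
    (hTheta : ∀ p ∈ W, ∀ φ : ∀ q, (Y q × X q) →ₗ[k] (Y q × X q),
      IsRHom k s t (BExt k s t (Mm + p.2.1) (Nm + p.2.2) (e + p.1))
        (BExt k s t (Mm + p.2.1) (Nm + p.2.2) (e + p.1)) φ →
      ∀ q, (LinearMap.snd k (Y q) (X q)).comp
        ((φ q).comp (LinearMap.inl k (Y q) (X q))) = 0) :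
    ∀ p ∈ W, Indec k s t (BExt k s t (Mm + p.2.1) (Nm + p.2.2) (e + p.1)) := by
  intro p hp
  obtain ⟨-, hlam, hmu⟩ := hW hp
  exact indec_bExt (hUM _ hlam) (hUN _ hmu) (hnonzero p hp) (hTheta p hp)
end

section
/- Let M, N be representations of Q with End(M) = k·id, End(N) = k·id and Hom(M,N) = 0, and suppose {e_1, …, e_n} ⊆ R(N,M) represents a basis of Ext(N,M). Fix 1 ≤ d ≤ n. For A = (v_{a_1}, …, v_{a_n}) with each v_{a_i} ∈ k^d (equivalently, a representation of the generalized Kronecker quiver K(n) of dimension vector (1,d), with v_{a_i} the matrix of the arrow a_i), let Γ(A) := Σ_{i=1}^n e_i ⊗ v_{a_i} ∈ R(N, M ⊗ k^d) ≅ R(N,M) ⊗ k^d, and let F(A) := B(Γ(A)) be the middle term of the corresponding extension of N by M ⊗ k^d ≅ M^d. Then: (1) F(A) ≅ F(A') if and only if A and A' are isomorphic as representations of K(n), which for these dimension vectors holds if and only if there exists g ∈ GL_d(k) with A = gA' (i.e. v_{a_i} = g·v'_{a_i} for all i); and (2) F(A) is indecomposable if and only if the d×n matrix with columns v_{a_1},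 …, v_{a_n} has rank d (equivalently, A is indecomposable as a representation of K(n)). -/
open QuivRep

variable {k : Type} [Field k] {V A : Type} [Fintype V] [Fintype A] (s t : A → V)
variable {X Y : V → Type}
  [∀ q, AddCommGroup (X q)] [∀ q, Module k (X q)] [∀ q, FiniteDimensional k (X q)]
  [∀ q, AddCommGroup (Y q)] [∀ q, Module k (Y q)] [∀ q, FiniteDimensional k (Y q)]

/-- The representation `M ⊗ k^d ≅ M^d`, realized on the vertex spaces `Fin d → Y q`. -/
def piRep (d : ℕ) (Mm : RSp k s t Y Y) :
    RSp k s t (fun q => Fin d → Y q) (fun q => Fin d → Y q) :=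
  fun a => LinearMap.pi (fun j => (Mm a).comp (LinearMap.proj j))

/-- `Γ(A) = Σ_i e_i ⊗ v_{a_i} ∈ R(N, M ⊗ k^d)` for a dimension-`(1,d)` representation
`v` of the generalized Kronecker quiver `K(n)`. -/
def Gamma (n d : ℕ) (e : Fin n → RSp k s t X Y) (v : Fin n → Fin d → k) :
    RSp k s t X (fun q => Fin d → Y q) :=
  fun a => LinearMap.pi (fun j => ∑ i, v i j • e i a)

/-!
Write a morphism `F(v) → F(v')` as a block matrix with respect to `F(v) = M^d ⊕ N`. Since
`Hom(M, N) = 0` it is upper triangular, and since `M` and `N` are Schurian its diagonal blocks are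
`g ⊗ id_M` for a matrix `g` and `c • id_N` for a scalar `c`. The off-diagonal block is a homotopy
between `c • Γ(v')` and `(g ⊗ id) ∘ Γ(v) = Γ(g v)`; as the `e i` are independent modulo
coboundaries, this forces `g v_i = c v'_i` for all `i`. Conversely `diag(g ⊗ id, id)` is a
morphism whenever `g v_i = v'_i`.

For an isomorphism, `c ≠ 0` and `g` is invertible, so `v = (c g⁻¹) v'`. An idempotent
endomorphism of `F(v)` has `g = c • 1` when the `v_i` span `k^d`, hence is `0` or `1`; if they do
not, a projection of `k^d` onto their span gives a nontrivial idempotent `diag(g ⊗ id, id)`.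
-/

namespace QuivRep

section Decomposition

variable {k : Type} [Field k] {V A : Type} {s t : A → V} {X : V → Type}
  [∀ q, AddCommGroup (X q)] [∀ q, Module k (X q)]

theorem indec_iff_isIdempotentElem (Mm : RSp k s t X X) :
    Indec k s t Mm ↔ (∃ q, ∃ x : X q, x ≠ 0) ∧
      ∀ π : ∀ q, Module.End k (X q), IsRHom k s t Mm Mm π → (∀ q, IsIdempotentElem (π q)) →
        (∀ q, π q = 0) ∨ (∀ q, π q = 1) := by
  refine and_congr_right fun _ => ⟨fun hdec π hπ hidem => ?_, fun htriv U W hU hW hinf hsup => ?_⟩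
  · have hcompl q := LinearMap.IsIdempotentElem.isCompl (hidem q)
    refine (hdec (fun q => LinearMap.range (π q)) (fun q => LinearMap.ker (π q)) ?_ ?_
      (fun q => (hcompl q).inf_eq_bot) (fun q => (hcompl q).sup_eq_top)).imp
      (fun h q => LinearMap.range_eq_bot.mp (h q)) (fun h q => ?_)
    · rintro a _ ⟨z, rfl⟩
      exact ⟨Mm a z, LinearMap.congr_fun (hπ a) z⟩
    · intro a x hx
      rw [LinearMap.mem_ker] at hx ⊢
      rw [← LinearMap.comp_apply, hπ a, LinearMap.comp_apply, hx, map_zero]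
    · have h1 := LinearMap.IsIdempotentElem.ker_eq_range_one_sub (hidem q)
      rw [h q, eq_comm, LinearMap.range_eq_bot, sub_eq_zero] at h1
      exact h1.symm
  · have hcompl q : IsCompl (U q) (W q) := ⟨disjoint_iff.mpr (hinf q), codisjoint_iff.mpr (hsup q)⟩
    have hπ : IsRHom k s t Mm Mm fun q => (U q).projection (W q) (hcompl q) := by
      intro a
      ext z
      obtain ⟨u, hu, w, hw, rfl⟩ := Submodule.mem_sup.mp (hsup (s a) ▸ Submodule.mem_top (x := z))
      simp [Submodule.projection_apply_of_mem_left, Submodule.projection_apply_of_mem_right,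
        hu, hw, hU a u hu, hW a w hw]
    refine (htriv _ hπ fun q => Submodule.isIdempotentElem_projection _).imp
      (fun h q => ?_) (fun h q => ?_)
    · simpa [h q] using (Submodule.range_projection (hcompl q)).symm
    · simpa [h q, Module.End.one_eq_id] using (Submodule.ker_projection (hcompl q)).symm

end Decomposition

section Extension

variable {k : Type} [Field k] {V A : Type} {s t : A → V} {X X' Y Y' : V → Type}
  [∀ q, AddCommGroup (X q)] [∀ q, Module k (X q)] [∀ q, AddCommGroup (X' q)] [∀ q, Module k (X' q)]
  [∀ q, AddCommGroup (Y q)] [∀ q, Module k (Y q)] [∀ q, AddCommGroup (Y' q)] [∀ q, Module k (Y' q)]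
  {Mm : RSp k s t Y Y} {Nm : RSp k s t X X} {f : RSp k s t X Y}
  {Mm' : RSp k s t Y' Y'} {Nm' : RSp k s t X' X'} {f' : RSp k s t X' Y'}

@[simp]
theorem BExt_apply (a : A) (z : Y (s a) × X (s a)) :
    BExt k s t Mm Nm f a z = (Mm a z.1 + f a z.2, Nm a z.2) := rfl

theorem isRHom_BExt_prodMap {α : ∀ q, Y q →ₗ[k] Y' q} {δ : ∀ q, X q →ₗ[k] X' q}
    (hα : IsRHom k s t Mm Mm' α) (hδ : IsRHom k s t Nm Nm' δ)
    (hf : ∀ a, (α (t a)).comp (f a) = (f' a).comp (δ (s a))) :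
    IsRHom k s t (BExt k s t Mm Nm f) (BExt k s t Mm' Nm' f') fun q => (α q).prodMap (δ q) := by
  intro a
  refine LinearMap.ext fun z => Prod.ext ?_ ?_
  · simpa using congrArg₂ (· + ·) (LinearMap.congr_fun (hα a) z.1) (LinearMap.congr_fun (hf a) z.2)
  · exact LinearMap.congr_fun (hδ a) z.2

namespace IsRHom

variable {φ : ∀ q, (Y q × X q) →ₗ[k] (Y' q × X' q)}

theorem BExt_apply_pair (hφ : IsRHom k s t (BExt k s t Mm Nm f) (BExt k s t Mm' Nm' f') φ)
    (a : A) (y : Y (s a)) (x : X (s a)) :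
    φ (t a) (Mm a y + f a x, Nm a x) =
      (Mm' a (φ (s a) (y, x)).1 + f' a (φ (s a) (y, x)).2, Nm' a (φ (s a) (y, x)).2) :=
  LinearMap.congr_fun (hφ a) (y, x)

theorem BExt_snd_comp_inl (hφ : IsRHom k s t (BExt k s t Mm Nm f) (BExt k s t Mm' Nm' f') φ)
    (hHom : HomZero k s t Mm Nm') (q : V) :
    LinearMap.snd k _ _ ∘ₗ φ q ∘ₗ LinearMap.inl k _ _ = 0 :=
  congrFun (hHom (fun q => LinearMap.snd k _ _ ∘ₗ φ q ∘ₗ LinearMap.inl k _ _) fun a => by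
    ext y; simpa using congrArg Prod.snd (hφ.BExt_apply_pair a y 0)) q

theorem BExt_fst_comp_inl (hφ : IsRHom k s t (BExt k s t Mm Nm f) (BExt k s t Mm' Nm' f') φ)
    (hHom : HomZero k s t Mm Nm') :
    IsRHom k s t Mm Mm' fun q => LinearMap.fst k _ _ ∘ₗ φ q ∘ₗ LinearMap.inl k _ _ := by
  intro a
  ext y
  have hγ := LinearMap.congr_fun (hφ.BExt_snd_comp_inl hHom (s a)) y
  have := congrArg Prod.fst (hφ.BExt_apply_pair a y 0)
  simp_all

theorem BExt_snd_comp_inr (hφ : IsRHom k s t (BExt k s t Mm Nm f) (BExt k s t Mm' Nm' f') φ)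
    (hHom : HomZero k s t Mm Nm') :
    IsRHom k s t Nm Nm' fun q => LinearMap.snd k _ _ ∘ₗ φ q ∘ₗ LinearMap.inr k _ _ := by
  intro a
  ext x
  have hγ := LinearMap.congr_fun (hφ.BExt_snd_comp_inl hHom (t a)) (f a x)
  have := congrArg Prod.snd (hφ.BExt_apply_pair a 0 x)
  rw [map_zero, zero_add, show (f a x, Nm a x) = (f a x, 0) + (0, Nm a x) by simp, map_add] at this
  simp_all

/-- Witnessed by the top-right block of `φ`. -/
theorem BExt_mem_range_dMap (hφ : IsRHom k s t (BExt k s t Mm Nm f) (BExt k s t Mm' Nm' f') φ) :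
    (fun a => f' a ∘ₗ (LinearMap.snd k _ _ ∘ₗ φ (s a) ∘ₗ LinearMap.inr k _ _) -
        (LinearMap.fst k _ _ ∘ₗ φ (t a) ∘ₗ LinearMap.inl k _ _) ∘ₗ f a) ∈
      LinearMap.range (dMap k s t Nm Mm') := by
  refine ⟨fun q => LinearMap.fst k _ _ ∘ₗ φ q ∘ₗ LinearMap.inr k _ _, funext fun a => ?_⟩
  ext x
  have := congrArg Prod.fst (hφ.BExt_apply_pair a 0 x)
  rw [map_zero, zero_add, show (f a x, Nm a x) = (f a x, 0) + (0, Nm a x) by simp, map_add] at this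
  simp only [dMap, LinearMap.coe_mk, AddHom.coe_mk, LinearMap.sub_apply, LinearMap.comp_apply,
    LinearMap.fst_apply, LinearMap.snd_apply, LinearMap.inl_apply, LinearMap.inr_apply,
    Prod.fst_add] at this ⊢
  linear_combination (norm := module) this

end IsRHom

end Extension

section MatrixAction

open scoped Matrix

variable {k : Type} [Field k] {ι : Type} [Fintype ι]

/-- `g ⊗ id_W` on `k^ι ⊗ W`, realized on `ι → W`. -/
def matAct (g : Matrix ι ι k) (W : Type) [AddCommGroup W] [Module k W] :
    Module.End k (ι → W) :=
  LinearMap.pi fun j => ∑ l, g j l • LinearMap.proj l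

variable {W W' : Type} [AddCommGroup W] [Module k W] [AddCommGroup W'] [Module k W']

theorem pi_smul_left_injective {κ : Type} {y : W} (hy : y ≠ 0) :
    Function.Injective fun (w : κ → k) j => w j • y :=
  fun _ _ h => funext fun j => smul_left_injective k hy (congrFun h j)

@[simp]
theorem matAct_apply (g : Matrix ι ι k) (y : ι → W) (j : ι) :
    matAct g W y j = ∑ l, g j l • y l := by
  simp [matAct]

theorem matAct_mul (g h : Matrix ι ι k) : matAct (g * h) W = matAct g W ∘ₗ matAct h W := by
  ext y j
  simp only [matAct_apply, Matrix.mul_apply, LinearMap.comp_apply, Finset.smul_sum, smul_smul,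
    Finset.sum_smul]
  exact Finset.sum_comm

theorem matAct_one [DecidableEq ι] : matAct (1 : Matrix ι ι k) W = LinearMap.id := by
  ext y j
  simp [Matrix.one_apply]

theorem matAct_smul_one [DecidableEq ι] (c : k) (y : ι → W) :
    matAct (c • (1 : Matrix ι ι k)) W y = c • y := by
  ext j
  simp [Matrix.one_apply]

theorem matAct_map (g : Matrix ι ι k) (F : W →ₗ[k] W') (y : ι → W) :
    matAct g W' (fun j => F (y j)) = fun j => F (matAct g W y j) := by
  ext j
  simp

theorem matAct_sum_smul {n : Type} [Fintype n] (g : Matrix ι ι k) (v : n → ι → k) (y : n → W) :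
    matAct g W (fun j => ∑ i, v i j • y i) = fun j => ∑ i, (g *ᵥ v i) j • y i := by
  funext j
  simp only [matAct_apply, Matrix.mulVec, dotProduct, Finset.smul_sum, smul_smul, Finset.sum_smul]
  exact Finset.sum_comm

theorem matAct_smul_right (g : Matrix ι ι k) (w : ι → k) (y : W) :
    matAct g W (fun j => w j • y) = fun j => (g *ᵥ w) j • y := by
  funext j
  simp [Matrix.mulVec, dotProduct, smul_smul, Finset.sum_smul]

theorem matAct_bijective [DecidableEq ι] (u : GL ι k) :
    Function.Bijective (matAct (u : Matrix ι ι k) W) := by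
  refine Function.bijective_iff_has_inverse.mpr
    ⟨matAct ((u⁻¹ : GL ι k) : Matrix ι ι k) W, fun y => ?_, fun y => ?_⟩
  · rw [← LinearMap.comp_apply, ← matAct_mul, ← Units.val_mul, inv_mul_cancel, Units.val_one,
      matAct_one, LinearMap.id_apply]
  · rw [← LinearMap.comp_apply, ← matAct_mul, ← Units.val_mul, mul_inv_cancel, Units.val_one,
      matAct_one, LinearMap.id_apply]

end MatrixAction

section Kronecker

open scoped Matrix

variable {k : Type} [Field k] {V A : Type} {s t : A → V} {X Y : V → Type}
  [∀ q, AddCommGroup (X q)] [∀ q, Module k (X q)] [∀ q, AddCommGroup (Y q)] [∀ q, Module k (Y q)]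
  {d n : ℕ} {Mm : RSp k s t Y Y} {Nm : RSp k s t X X}

theorem piRep_apply (a : A) (y : Fin d → Y (s a)) (j : Fin d) :
    piRep s t d Mm a y j = Mm a (y j) :=
  rfl

theorem piRep_single (a : A) (l : Fin d) (y : Y (s a)) :
    piRep s t d Mm a (Pi.single l y) = Pi.single l (Mm a y) := by
  funext j
  by_cases h : j = l
  · subst h; simp [piRep_apply]
  · simp [piRep_apply, h]

theorem isRHom_matAct (g : Matrix (Fin d) (Fin d) k) :
    IsRHom k s t (piRep s t d Mm) (piRep s t d Mm) fun q => matAct g (Y q) :=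
  fun a => LinearMap.ext fun y => matAct_map g (Mm a) y

theorem HomZero.piRep (h : HomZero k s t Mm Nm) : HomZero k s t (piRep s t d Mm) Nm := by
  intro φ hφ
  funext q
  refine LinearMap.pi_ext' fun l => ?_
  have hl := h (fun q => φ q ∘ₗ LinearMap.single k (fun _ => Y q) l) fun a =>
    LinearMap.ext fun y => by
      simpa only [LinearMap.comp_apply, LinearMap.single_apply, piRep_single] using
        LinearMap.congr_fun (hφ a) (Pi.single l y)
  simpa using congrFun hl q

theorem EndTrivial.exists_matAct_eq (h : EndTrivial k s t Mm)
    {α : ∀ q, Module.End k (Fin d → Y q)} (hα : IsRHom k s t (piRep s t d Mm) (piRep s t d Mm) α) :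
    ∃ g : Matrix (Fin d) (Fin d) k, ∀ q, α q = matAct g (Y q) := by
  have hentry (j l : Fin d) : ∃ c : k, ∀ q,
      LinearMap.proj j ∘ₗ α q ∘ₗ LinearMap.single k (fun _ => Y q) l = c • LinearMap.id :=
    h _ fun a => LinearMap.ext fun y => by
      simpa only [LinearMap.comp_apply, LinearMap.single_apply, LinearMap.proj_apply,
        LinearMap.smul_apply, LinearMap.id_apply, piRep_single, piRep_apply] using
        congrFun (LinearMap.congr_fun (hα a) (Pi.single l y)) j
  choose g hg using hentry
  refine ⟨Matrix.of g, fun q =>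
    LinearMap.pi_ext' fun l => LinearMap.ext fun y => funext fun j => ?_⟩
  simpa [Pi.single_apply] using LinearMap.congr_fun (hg j l q) y

@[simp]
theorem Gamma_apply (e : Fin n → RSp k s t X Y) (v : Fin n → Fin d → k) (a : A) (x : X (s a)) :
    Gamma s t n d e v a x = fun j => ∑ i, v i j • e i a x := by
  funext j
  simp [Gamma]

theorem Gamma_sub (e : Fin n → RSp k s t X Y) (v w : Fin n → Fin d → k) :
    Gamma s t n d e (v - w) = Gamma s t n d e v - Gamma s t n d e w := by
  funext a
  ext x j
  simp [sub_smul]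

theorem Gamma_smul (e : Fin n → RSp k s t X Y) (c : k) (v : Fin n → Fin d → k) :
    Gamma s t n d e (c • v) = c • Gamma s t n d e v := by
  funext a
  ext x j
  simp [Finset.smul_sum, smul_smul]

theorem matAct_comp_Gamma (e : Fin n → RSp k s t X Y) (v : Fin n → Fin d → k)
    (g : Matrix (Fin d) (Fin d) k) (a : A) :
    matAct g (Y (t a)) ∘ₗ Gamma s t n d e v a = Gamma s t n d e (fun i => g *ᵥ v i) a :=
  LinearMap.ext fun x => by simp only [LinearMap.comp_apply, Gamma_apply, matAct_sum_smul]

theorem eq_zero_of_Gamma_mem_range_dMap {e : Fin n → RSp k s t X Y}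
    (hindep : LinearIndependent k fun i =>
      Submodule.Quotient.mk (p := LinearMap.range (dMap k s t Nm Mm)) (e i))
    {w : Fin n → Fin d → k}
    (hw : Gamma s t n d e w ∈ LinearMap.range (dMap k s t Nm (piRep s t d Mm))) : w = 0 := by
  obtain ⟨β, hβ⟩ := hw
  funext i j
  have hj : ∑ i, w i j • e i ∈ LinearMap.range (dMap k s t Nm Mm) :=
    ⟨fun q => LinearMap.proj j ∘ₗ β q, funext fun a => LinearMap.ext fun x => by
      simpa [dMap, Finset.sum_apply, piRep_apply] using
        congrFun (LinearMap.congr_fun (congrFun hβ a) x) j⟩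
  refine Fintype.linearIndependent_iff.mp hindep (fun i => w i j) ?_ i
  simpa only [← Submodule.mkQ_apply, map_sum, map_smul] using
    (Submodule.Quotient.mk_eq_zero _).mpr hj

end Kronecker

theorem rank_of_cols_eq_iff_span_eq_top {k ι : Type} [Field k] [Fintype ι] {d : ℕ}
    (v : ι → Fin d → k) :
    (Matrix.of fun j i => v i j).rank = d ↔ Submodule.span k (Set.range v) = ⊤ := by
  rw [Matrix.rank_eq_finrank_span_cols, Submodule.eq_top_iff_finrank_eq, Module.finrank_fin_fun]
  rfl

theorem eq_zero_of_isIdempotentElem_of_map_inl {R P Q : Type} [Semiring R] [AddCommMonoid P]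
    [Module R P] [AddCommMonoid Q] [Module R Q] {p : Module.End R (P × Q)} (hp : IsIdempotentElem p)
    (hinl : ∀ y, p (y, 0) = 0) (hsnd : ∀ z, (p z).2 = 0) : p = 0 := by
  refine LinearMap.ext fun z => ?_
  rw [← hp.eq, Module.End.mul_apply, ← Prod.mk.eta (p := p z), hsnd, hinl, LinearMap.zero_apply]

section ExtensionFamily

open scoped Matrix

variable {k : Type} [Field k] {V A : Type} {s t : A → V} {X Y : V → Type}
  [∀ q, AddCommGroup (X q)] [∀ q, Module k (X q)] [∀ q, AddCommGroup (Y q)] [∀ q, Module k (Y q)]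
  {d n : ℕ} {Mm : RSp k s t Y Y} {Nm : RSp k s t X X} {e : Fin n → RSp k s t X Y}

theorem isRHom_BExt_Gamma_matAct {v v' : Fin n → Fin d → k} {g : Matrix (Fin d) (Fin d) k}
    (hg : ∀ i, g *ᵥ v i = v' i) :
    IsRHom k s t (BExt k s t (piRep s t d Mm) Nm (Gamma s t n d e v))
      (BExt k s t (piRep s t d Mm) Nm (Gamma s t n d e v'))
      fun q => (matAct g (Y q)).prodMap LinearMap.id :=
  isRHom_BExt_prodMap (isRHom_matAct g) (fun a => rfl) fun a => by
    rw [matAct_comp_Gamma, LinearMap.comp_id]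
    simp only [hg]

theorem exists_matrix_of_isRHom_BExt_Gamma (hEndM : EndTrivial k s t Mm)
    (hEndN : EndTrivial k s t Nm) (hHomMN : HomZero k s t Mm Nm)
    (hindep : LinearIndependent k fun i =>
      Submodule.Quotient.mk (p := LinearMap.range (dMap k s t Nm Mm)) (e i))
    {v v' : Fin n → Fin d → k} {φ : ∀ q, Module.End k ((Fin d → Y q) × X q)}
    (hφ : IsRHom k s t (BExt k s t (piRep s t d Mm) Nm (Gamma s t n d e v))
      (BExt k s t (piRep s t d Mm) Nm (Gamma s t n d e v')) φ) :
    ∃ (g : Matrix (Fin d) (Fin d) k) (c : k), (∀ q y, φ q (y, 0) = (matAct g (Y q) y, 0)) ∧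
      (∀ q z, (φ q z).2 = c • z.2) ∧ ∀ i, g *ᵥ v i = c • v' i := by
  have hHom : HomZero k s t (piRep s t d Mm) Nm := hHomMN.piRep
  have hγ := hφ.BExt_snd_comp_inl hHom
  obtain ⟨g, hg⟩ := hEndM.exists_matAct_eq (hφ.BExt_fst_comp_inl hHom)
  obtain ⟨c, hc⟩ := hEndN _ (hφ.BExt_snd_comp_inr hHom)
  have hcoeff : (c • v' - fun i => g *ᵥ v i) = 0 := by
    refine eq_zero_of_Gamma_mem_range_dMap hindep ?_
    convert hφ.BExt_mem_range_dMap using 1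
    funext a
    rw [hg, hc, matAct_comp_Gamma, Gamma_sub, Gamma_smul]
    ext x j
    simp
  refine ⟨g, c, fun q y => Prod.ext ?_ ?_, fun q z => ?_, fun i => ?_⟩
  · exact LinearMap.congr_fun (hg q) y
  · exact LinearMap.congr_fun (hγ q) y
  · have h₁ := LinearMap.congr_fun (hγ q) z.1
    have h₂ := LinearMap.congr_fun (hc q) z.2
    simp only [LinearMap.comp_apply, LinearMap.inl_apply, LinearMap.inr_apply,
      LinearMap.snd_apply, LinearMap.zero_apply, LinearMap.smul_apply, LinearMap.id_apply] at h₁ h₂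
    calc (φ q z).2 = (φ q (z.1, 0) + φ q (0, z.2)).2 := by rw [← map_add]; simp
      _ = c • z.2 := by rw [Prod.snd_add, h₁, h₂, zero_add]
  · exact (sub_eq_zero.mp (congrFun hcoeff i)).symm

theorem riso_BExt_Gamma_iff (hEndM : EndTrivial k s t Mm)
    (hEndN : EndTrivial k s t Nm) (hHomMN : HomZero k s t Mm Nm)
    (hindep : LinearIndependent k fun i =>
      Submodule.Quotient.mk (p := LinearMap.range (dMap k s t Nm Mm)) (e i))
    (hN : ∃ q, ∃ x : X q, x ≠ 0) (hM : ∃ q, ∃ y : Y q, y ≠ 0) (v v' : Fin n → Fin d → k) :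
    RIso k s t (BExt k s t (piRep s t d Mm) Nm (Gamma s t n d e v))
        (BExt k s t (piRep s t d Mm) Nm (Gamma s t n d e v')) ↔
      ∃ u : GL (Fin d) k, ∀ i, v i = (u : Matrix (Fin d) (Fin d) k) *ᵥ v' i := by
  constructor
  · rintro ⟨φ, hφ, hbij⟩
    obtain ⟨g, c, hφ₁, hφ₂, hgc⟩ := exists_matrix_of_isRHom_BExt_Gamma hEndM hEndN hHomMN hindep hφ
    obtain ⟨q₀, x₀, hx₀⟩ := hN
    obtain ⟨q₁, y₀, hy₀⟩ := hM
    have hc : c ≠ 0 := by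
      rintro rfl
      obtain ⟨z, hz⟩ := (hbij q₀).2 (0, x₀)
      exact hx₀ (by simpa [hφ₂] using (congrArg Prod.snd hz).symm)
    have hg : Function.Injective g.mulVec := fun w w' h => pi_smul_left_injective hy₀ <|
      congrArg Prod.fst ((hbij q₁).1 (by simp only [hφ₁, matAct_smul_right, h]) :
        ((fun j => w j • y₀, 0) : (Fin d → Y q₁) × X q₁) = (fun j => w' j • y₀, 0))
    have hunit : IsUnit (c⁻¹ • g) := Matrix.mulVec_injective_iff_isUnit.mp fun w w' h =>
      hg <| smul_right_injective (Fin d → k) (inv_ne_zero hc) <| by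
        simpa [Matrix.smul_mulVec] using h
    obtain ⟨u, hu⟩ := hunit
    refine ⟨u⁻¹, fun i => ?_⟩
    have hv : (u : Matrix (Fin d) (Fin d) k) *ᵥ v i = v' i := by
      rw [hu, Matrix.smul_mulVec, hgc i, inv_smul_smul₀ hc]
    rw [← hv, Matrix.mulVec_mulVec, Units.inv_mul, Matrix.one_mulVec]
  · rintro ⟨u, hu⟩
    have hv (i : Fin n) : ((u⁻¹ : GL (Fin d) k) : Matrix (Fin d) (Fin d) k) *ᵥ v i = v' i := by
      rw [hu i, Matrix.mulVec_mulVec, Units.inv_mul, Matrix.one_mulVec]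
    refine ⟨_, isRHom_BExt_Gamma_matAct hv, fun q => ?_⟩
    rw [LinearMap.coe_prodMap]
    exact (matAct_bijective u⁻¹).prodMap Function.bijective_id

theorem span_eq_top_of_indec_BExt_Gamma (hN : ∃ q, ∃ x : X q, x ≠ 0)
    (hM : ∃ q, ∃ y : Y q, y ≠ 0) {v : Fin n → Fin d → k}
    (hv : Indec k s t (BExt k s t (piRep s t d Mm) Nm (Gamma s t n d e v))) :
    Submodule.span k (Set.range v) = ⊤ := by
  obtain ⟨q₀, x₀, hx₀⟩ := hN
  obtain ⟨q₁, y₀, hy₀⟩ := hM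
  by_contra hspan
  obtain ⟨T, hT⟩ := Submodule.exists_isCompl (Submodule.span k (Set.range v))
  set p := (Submodule.span k (Set.range v)).projection T hT
  have hgv (i : Fin n) : LinearMap.toMatrix' p *ᵥ v i = v i := by
    rw [LinearMap.toMatrix'_mulVec, Submodule.projection_apply_of_mem_left hT
      (Submodule.subset_span ⟨i, rfl⟩)]
  have hidem (q : V) : IsIdempotentElem ((matAct (LinearMap.toMatrix' p) (Y q)).prodMap
      (LinearMap.id : Module.End k (X q))) := by
    rw [IsIdempotentElem, Module.End.mul_eq_comp, LinearMap.prodMap_comp, ← matAct_mul,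
      ← LinearMap.toMatrix'_comp, ← Module.End.mul_eq_comp,
      (Submodule.isIdempotentElem_projection hT).eq]
    rfl
  rcases (indec_iff_isIdempotentElem _).mp hv |>.2 _ (isRHom_BExt_Gamma_matAct hgv) hidem
    with h0 | h1
  · exact hx₀ (by simpa using congrArg Prod.snd (LinearMap.congr_fun (h0 q₀) (0, x₀)))
  · refine hspan ?_
    have hp : p = LinearMap.id := LinearMap.ext fun w => by
      have := congrArg Prod.fst (LinearMap.congr_fun (h1 q₁) (fun j => w j • y₀, 0))
      simp only [LinearMap.prodMap_apply, matAct_smul_right, Module.End.one_apply] at this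
      simpa [LinearMap.toMatrix'_mulVec] using pi_smul_left_injective hy₀ this
    rw [← Submodule.range_projection hT]
    change LinearMap.range p = ⊤
    rw [hp, LinearMap.range_id]

theorem indec_BExt_Gamma_of_span_eq_top (hEndM : EndTrivial k s t Mm)
    (hEndN : EndTrivial k s t Nm) (hHomMN : HomZero k s t Mm Nm)
    (hindep : LinearIndependent k fun i =>
      Submodule.Quotient.mk (p := LinearMap.range (dMap k s t Nm Mm)) (e i))
    (hN : ∃ q, ∃ x : X q, x ≠ 0) {v : Fin n → Fin d → k}
    (hspan : Submodule.span k (Set.range v) = ⊤) :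
    Indec k s t (BExt k s t (piRep s t d Mm) Nm (Gamma s t n d e v)) := by
  obtain ⟨q₀, x₀, hx₀⟩ := hN
  refine (indec_iff_isIdempotentElem _).mpr ⟨⟨q₀, (0, x₀), by simp [hx₀]⟩, fun π hπ hidem => ?_⟩
  obtain ⟨g, c, hπ₁, hπ₂, hgc⟩ := exists_matrix_of_isRHom_BExt_Gamma hEndM hEndN hHomMN hindep hπ
  have hg : g = c • 1 := Matrix.toLin'.injective <| LinearMap.ext_on_range hspan fun i => by
    simp [hgc i]
  have hπ₁' (q : V) (y : Fin d → Y q) : π q (y, 0) = (c • y, 0) := by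
    rw [hπ₁, hg, matAct_smul_one]
  have hc : IsIdempotentElem c := by
    have := congrArg Prod.snd (LinearMap.congr_fun (hidem q₀) (0, x₀))
    simp only [Module.End.mul_apply, hπ₂] at this
    exact smul_left_injective k hx₀ (by simpa [smul_smul] using this)
  rcases IsIdempotentElem.iff_eq_zero_or_one.mp hc with rfl | rfl
  · refine Or.inl fun q => eq_zero_of_isIdempotentElem_of_map_inl (hidem q)
      (fun y => by simp [hπ₁']) fun z => by simp [hπ₂]
  · refine Or.inr fun q => (sub_eq_zero.mp (eq_zero_of_isIdempotentElem_of_map_inl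
      (hidem q).one_sub (fun y => by simp [hπ₁']) fun z => by simp [hπ₂])).symm

end ExtensionFamily

end QuivRep

theorem statement5
    (Mm : RSp k s t Y Y) (Nm : RSp k s t X X)
    (hEndM : EndTrivial k s t Mm) (hEndN : EndTrivial k s t Nm)
    (hHomMN : HomZero k s t Mm Nm)
    (n : ℕ) (e : Fin n → RSp k s t X Y)
    (hindep : LinearIndependent k (fun i =>
      Submodule.Quotient.mk (p := LinearMap.range (dMap k s t Nm Mm)) (e i)))
    (d : ℕ) (hd : 1 ≤ d) (hdn : d ≤ n)
    (v v' : Fin n → Fin d → k) :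
    (RIso k s t (BExt k s t (piRep s t d Mm) Nm (Gamma s t n d e v))
        (BExt k s t (piRep s t d Mm) Nm (Gamma s t n d e v')) ↔
      ∃ g : GL (Fin d) k, ∀ i, v i = (g : Matrix (Fin d) (Fin d) k).mulVec (v' i)) ∧
    (Indec k s t (BExt k s t (piRep s t d Mm) Nm (Gamma s t n d e v)) ↔
      Matrix.rank (Matrix.of (fun (j : Fin d) (i : Fin n) => v i j)) = d) := by
  obtain ⟨a, x, hx⟩ : ∃ a x, e ⟨0, by omega⟩ a x ≠ 0 := by
    have he : e ⟨0, by omega⟩ ≠ 0 := fun h => hindep.ne_zero ⟨0, by omega⟩ (by simp [h])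
    by_contra! h
    exact he (funext fun a => LinearMap.ext (h a))
  have hN : ∃ q, ∃ x : X q, x ≠ 0 := ⟨s a, x, fun h => hx (by simp [h])⟩
  have hM : ∃ q, ∃ y : Y q, y ≠ 0 := ⟨t a, _, hx⟩
  exact ⟨riso_BExt_Gamma_iff hEndM hEndN hHomMN hindep hN hM v v',
    (Iff.intro (span_eq_top_of_indec_BExt_Gamma hN hM)
      (indec_BExt_Gamma_of_span_eq_top hEndM hEndN hHomMN hindep hN)).trans
      (rank_of_cols_eq_iff_span_eq_top v).symm⟩
end

section
/- Let M and N be representations of Q and, for each pair X,Y ∈ {M,N}, let R_{X,Y} ⊆ R(X,Y) be a subset representing a basis of Ext(X,Y) (write R_X := R_{X,X}). For each e ∈ R(N,M), with associated extension 0 → M → B → N → 0 where B = B(e), there exist subsets R'_M ⊆ R_M, R'_N ⊆ R_N and R'_{N,M} ⊆ R_{N,M} such that, under the identification R(B,B) ≅ R(N,N) ⊕ R(N,M) ⊕ R(M,N) ⊕ R(M,M) induced by B_q = M_q ⊕ N_q, the set R'_M ∪ R'_N ∪ R'_{N,M} ∪ R_{M,N} represents a basis of Ext(B,B). -/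
open QuivRep

variable {k : Type} [Field k] {V A : Type} [Fintype V] [Fintype A] (s t : A → V)
variable {X Y : V → Type}
  [∀ q, AddCommGroup (X q)] [∀ q, Module k (X q)] [∀ q, FiniteDimensional k (X q)]
  [∀ q, AddCommGroup (Y q)] [∀ q, Module k (Y q)] [∀ q, FiniteDimensional k (Y q)]

/-- A subset `S ⊆ R(N,M)` represents a basis of `Ext(N,M)`: the projection
`π_{N,M}` restricts to a bijection from `S` onto a `k`-basis of `Ext(N,M)`. -/
def RepBasis (Nm : RSp k s t X X) (Mm : RSp k s t Y Y) (S : Set (RSp k s t X Y)) : Prop :=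
  LinearIndependent k (fun x : S =>
    Submodule.Quotient.mk (p := LinearMap.range (dMap k s t Nm Mm)) (x : RSp k s t X Y)) ∧
  Submodule.span k
    ((fun x => Submodule.Quotient.mk (p := LinearMap.range (dMap k s t Nm Mm)) x) '' S) = ⊤

/-- Embedding `R(M,M) → R(B,B)` (block `(1,1)`), under `B_q = M_q ⊕ N_q = Y_q × X_q`. -/
def embMM (f : RSp k s t Y Y) : RSp k s t (fun q => Y q × X q) (fun q => Y q × X q) :=
  fun a => (LinearMap.inl k (Y (t a)) (X (t a))).comp
    ((f a).comp (LinearMap.fst k (Y (s a)) (X (s a))))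

/-- Embedding `R(N,N) → R(B,B)` (block `(2,2)`). -/
def embNN (f : RSp k s t X X) : RSp k s t (fun q => Y q × X q) (fun q => Y q × X q) :=
  fun a => (LinearMap.inr k (Y (t a)) (X (t a))).comp
    ((f a).comp (LinearMap.snd k (Y (s a)) (X (s a))))

/-- Embedding `R(N,M) → R(B,B)` (block `(1,2)`). -/
def embNM (f : RSp k s t X Y) : RSp k s t (fun q => Y q × X q) (fun q => Y q × X q) :=
  fun a => (LinearMap.inl k (Y (t a)) (X (t a))).comp
    ((f a).comp (LinearMap.snd k (Y (s a)) (X (s a))))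

/-- Embedding `R(M,N) → R(B,B)` (block `(2,1)`). -/
def embMN (f : RSp k s t Y X) : RSp k s t (fun q => Y q × X q) (fun q => Y q × X q) :=
  fun a => (LinearMap.inr k (Y (t a)) (X (t a))).comp
    ((f a).comp (LinearMap.fst k (Y (s a)) (X (s a))))

theorem Set.exists_subset_image_union_image {α β γ : Type*} {f : α → γ} {g : β → γ}
    {A : Set α} {B : Set β} {S : Set γ} (hS : S ⊆ f '' A ∪ g '' B) :
    ∃ A' ⊆ A, ∃ B' ⊆ B, f '' A' ∪ g '' B' = S := by
  refine ⟨A ∩ f ⁻¹' S, Set.inter_subset_left, B ∩ g ⁻¹' S, Set.inter_subset_left, ?_⟩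
  rw [Set.image_inter_preimage, Set.image_inter_preimage, ← Set.union_inter_distrib_right,
    Set.inter_eq_right.mpr hS]

section QuotientBases

open Submodule

variable {R W : Type*} [Ring R] [AddCommGroup W] [Module R W]

/-- `S ⊆ G` represents a basis of `(G ⊔ P) / P`. -/
def RepresentsBasisMod (P G : Submodule R W) (S : Set W) : Prop :=
  S ⊆ G ∧ LinearIndepOn R P.mkQ S ∧ G ≤ span R S ⊔ P

theorem RepresentsBasisMod.union {D F G : Submodule R W} {S T : Set W} (hFG : F ≤ G)
    (hS : RepresentsBasisMod D F S) (hT : RepresentsBasisMod (F ⊔ D) G T) :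
    RepresentsBasisMod D G (S ∪ T) := by
  obtain ⟨hSF, hSind, hFS⟩ := hS
  obtain ⟨hTG, hTind, hGT⟩ := hT
  refine ⟨Set.union_subset (hSF.trans hFG) hTG, hSind.union_of_quotient ?_, ?_⟩
  · have hker : span R (D.mkQ '' S) ≤ LinearMap.ker (factor (le_sup_right : D ≤ F ⊔ D)) := by
      rw [span_le]
      rintro _ ⟨x, hx, rfl⟩
      simpa using (le_sup_left : F ≤ F ⊔ D) (hSF hx)
    exact hTind.of_comp ((span R (D.mkQ '' S)).liftQ _ hker)
  · calc G ≤ span R T ⊔ (F ⊔ D) := hGT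
      _ ≤ span R T ⊔ (span R S ⊔ D) := sup_le_sup_left (sup_le hFS le_sup_right) _
      _ = span R (S ∪ T) ⊔ D := by
        rw [span_union, sup_assoc, sup_left_comm]

theorem exists_representsBasisMod {K : Type*} [DivisionRing K] [Module K W]
    {P G : Submodule K W} {T : Set W} (hTG : T ⊆ G) (hGT : G ≤ span K T ⊔ P) :
    ∃ S ⊆ T, RepresentsBasisMod P G S := by
  obtain ⟨S, hST, -, hTS, hS⟩ :=
    exists_linearIndepOn_extension (v := P.mkQ) (linearIndepOn_empty K _) (Set.empty_subset T)
  refine ⟨S, hST, hST.trans hTG, hS, hGT.trans (sup_le ?_ le_sup_right)⟩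
  rw [span_le, sup_comm, ← comap_map_mkQ, Submodule.map_span]
  exact fun x hx => hTS ⟨x, hx, rfl⟩

theorem LinearIndepOn.image_mkQ_of_leftInverse {U : Type*} [AddCommGroup U] [Module R U]
    {P : Submodule R W} {D : Submodule R U} {p : W →ₗ[R] U} {i : U →ₗ[R] W}
    (hpi : Function.LeftInverse p i) (hP : P ≤ D.comap p) {S : Set U}
    (hS : LinearIndepOn R D.mkQ S) : LinearIndepOn R P.mkQ (i '' S) := by
  refine LinearIndepOn.image_of_comp (g := P.mkQ)
    (hs := LinearIndepOn.of_comp (P.mapQ D p hP) ?_)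
  convert hS using 1
  ext u
  simp [hpi u]

theorem range_le_span_image_sup {U U₀ : Type*} [AddCommGroup U] [Module R U]
    [AddCommGroup U₀] [Module R U₀] {i : U →ₗ[R] W} {d : U₀ →ₗ[R] U} {S : Set U}
    (hS : ⊤ ≤ span R S ⊔ LinearMap.range d) {P : Submodule R W} (hd : ∀ g, i (d g) ∈ P) :
    LinearMap.range i ≤ span R (i '' S) ⊔ P := by
  rw [LinearMap.range_eq_map, ← top_le_iff.mp hS, Submodule.map_sup, ← span_image]
  refine sup_le_sup_left ?_ _
  rintro _ ⟨_, ⟨g, rfl⟩, rfl⟩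
  exact hd g

end QuotientBases

section Blocks

omit [Fintype V] [Fintype A] [∀ q, FiniteDimensional k (X q)] [∀ q, FiniteDimensional k (Y q)]

open LinearMap Submodule

theorem repBasis_iff_representsBasisMod (Nm : RSp k s t X X) (Mm : RSp k s t Y Y)
    (S : Set (RSp k s t X Y)) :
    RepBasis s t Nm Mm S ↔ RepresentsBasisMod (LinearMap.range (dMap k s t Nm Mm)) ⊤ S := by
  simp only [RepBasis, RepresentsBasisMod, Submodule.top_coe, Set.subset_univ, true_and,
    top_le_iff]
  refine and_congr Iff.rfl ?_
  rw [show (fun x => Submodule.Quotient.mk x) = ⇑(range (dMap k s t Nm Mm)).mkQ from rfl,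
    span_image, map_mkQ_eq_top, sup_comm]

def RSp.sandwich {U U' Z Z' : V → Type} [∀ q, AddCommGroup (U q)] [∀ q, Module k (U q)]
    [∀ q, AddCommGroup (U' q)] [∀ q, Module k (U' q)] [∀ q, AddCommGroup (Z q)]
    [∀ q, Module k (Z q)] [∀ q, AddCommGroup (Z' q)] [∀ q, Module k (Z' q)]
    (i : ∀ q, U' q →ₗ[k] Z' q) (p : ∀ q, Z q →ₗ[k] U q) :
    RSp k s t U U' →ₗ[k] RSp k s t Z Z' where
  toFun f a := (i (t a)).comp ((f a).comp (p (s a)))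
  map_add' f g := by funext a; simp [add_comp, comp_add]
  map_smul' c f := by funext a; simp [smul_comp, comp_smul]

def inclMM : RSp k s t Y Y →ₗ[k] RSp k s t (fun q => Y q × X q) (fun q => Y q × X q) :=
  RSp.sandwich s t (fun q => inl k (Y q) (X q)) (fun q => fst k (Y q) (X q))

def inclNN : RSp k s t X X →ₗ[k] RSp k s t (fun q => Y q × X q) (fun q => Y q × X q) :=
  RSp.sandwich s t (fun q => inr k (Y q) (X q)) (fun q => snd k (Y q) (X q))

def inclNM : RSp k s t X Y →ₗ[k] RSp k s t (fun q => Y q × X q) (fun q => Y q × X q) :=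
  RSp.sandwich s t (fun q => inl k (Y q) (X q)) (fun q => snd k (Y q) (X q))

def inclMN : RSp k s t Y X →ₗ[k] RSp k s t (fun q => Y q × X q) (fun q => Y q × X q) :=
  RSp.sandwich s t (fun q => inr k (Y q) (X q)) (fun q => fst k (Y q) (X q))

def projMM : RSp k s t (fun q => Y q × X q) (fun q => Y q × X q) →ₗ[k] RSp k s t Y Y :=
  RSp.sandwich s t (fun q => fst k (Y q) (X q)) (fun q => inl k (Y q) (X q))

def projNN : RSp k s t (fun q => Y q × X q) (fun q => Y q × X q) →ₗ[k] RSp k s t X X :=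
  RSp.sandwich s t (fun q => snd k (Y q) (X q)) (fun q => inr k (Y q) (X q))

def projNM : RSp k s t (fun q => Y q × X q) (fun q => Y q × X q) →ₗ[k] RSp k s t X Y :=
  RSp.sandwich s t (fun q => fst k (Y q) (X q)) (fun q => inr k (Y q) (X q))

def projMN : RSp k s t (fun q => Y q × X q) (fun q => Y q × X q) →ₗ[k] RSp k s t Y X :=
  RSp.sandwich s t (fun q => snd k (Y q) (X q)) (fun q => inl k (Y q) (X q))

theorem incl_proj_sum_eq (v : RSp k s t (fun q => Y q × X q) (fun q => Y q × X q)) :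
    inclNM s t (projNM s t v) + inclMM s t (projMM s t v) + inclNN s t (projNN s t v)
      + inclMN s t (projMN s t v) = v := by
  funext a; ext z <;>
    simp [inclNM, inclMM, inclNN, inclMN, projNM, projMM, projNN, projMN, RSp.sandwich,
      Prod.mk_zero_zero]

theorem projMN_inclMN :
    Function.LeftInverse (projMN (k := k) (X := X) (Y := Y) s t) (inclMN s t) := by
  intro f; funext a; ext z; simp [inclMN, projMN, RSp.sandwich]

local notation "𝓕₁" => range (inclNM (k := k) (X := X) (Y := Y) s t)
local notation "𝓕₂" => 𝓕₁ ⊔ range (inclMM (k := k) (X := X) (Y := Y) s t) ⊔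
  range (inclNN (k := k) (X := X) (Y := Y) s t)

theorem top_le_sup_range_inclMN : ⊤ ≤ 𝓕₂ ⊔ range (inclMN s t) := by
  intro v _
  rw [← incl_proj_sum_eq s t v]
  exact add_mem (mem_sup_left (add_mem (add_mem (mem_sup_left (mem_sup_left ⟨_, rfl⟩))
    (mem_sup_left (mem_sup_right ⟨_, rfl⟩))) (mem_sup_right ⟨_, rfl⟩)))
    (mem_sup_right ⟨_, rfl⟩)

theorem sup_range_incl_le_ker_projMN : 𝓕₂ ≤ ker (projMN s t) := by
  refine sup_le (sup_le ?_ ?_) ?_ <;> rintro _ ⟨f, rfl⟩ <;> funext a <;> ext z <;>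
    simp [inclNM, inclMM, inclNN, projMN, RSp.sandwich]

section Extension

variable (Mm : RSp k s t Y Y) (Nm : RSp k s t X X) (e : RSp k s t X Y)

theorem dMap_bExt_inl_comp_snd (g : ∀ q, X q →ₗ[k] Y q) :
    dMap k s t (BExt k s t Mm Nm e) (BExt k s t Mm Nm e)
      (fun q => inl k _ _ ∘ₗ g q ∘ₗ snd k _ _)
      = inclNM s t (dMap k s t Nm Mm g) := by
  funext a; ext z <;> simp [dMap, BExt, inclNM, RSp.sandwich]

theorem dMap_bExt_inl_comp_fst (g : ∀ q, Y q →ₗ[k] Y q) :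
    dMap k s t (BExt k s t Mm Nm e) (BExt k s t Mm Nm e)
      (fun q => inl k _ _ ∘ₗ g q ∘ₗ fst k _ _)
      = inclMM s t (dMap k s t Mm Mm g) + inclNM s t (fun a => g (t a) ∘ₗ e a) := by
  funext a; ext z <;> simp [dMap, BExt, inclNM, inclMM, RSp.sandwich]

theorem dMap_bExt_inr_comp_snd (g : ∀ q, X q →ₗ[k] X q) :
    dMap k s t (BExt k s t Mm Nm e) (BExt k s t Mm Nm e)
      (fun q => inr k _ _ ∘ₗ g q ∘ₗ snd k _ _)
      = inclNN s t (dMap k s t Nm Nm g) - inclNM s t (fun a => e a ∘ₗ g (s a)) := by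
  funext a; ext z <;> simp [dMap, BExt, inclNM, inclNN, RSp.sandwich]

theorem dMap_bExt_inr_comp_fst (g : ∀ q, Y q →ₗ[k] X q) :
    dMap k s t (BExt k s t Mm Nm e) (BExt k s t Mm Nm e)
      (fun q => inr k _ _ ∘ₗ g q ∘ₗ fst k _ _)
      = inclMN s t (dMap k s t Mm Nm g) + inclNN s t (fun a => g (t a) ∘ₗ e a)
        - inclMM s t (fun a => e a ∘ₗ g (s a)) := by
  funext a; ext z <;> simp [dMap, BExt, inclMM, inclNN, inclMN, RSp.sandwich]

theorem projMN_dMap_bExt (f : ∀ q, (Y q × X q) →ₗ[k] (Y q × X q)) :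
    projMN s t (dMap k s t (BExt k s t Mm Nm e) (BExt k s t Mm Nm e) f)
      = dMap k s t Mm Nm (fun q => snd k _ _ ∘ₗ f q ∘ₗ inl k _ _) := by
  funext a; ext z; simp [dMap, BExt, projMN, RSp.sandwich]

local notation "𝓓" => range (dMap k s t (BExt k s t Mm Nm e) (BExt k s t Mm Nm e))

theorem inclNM_dMap_mem (g : ∀ q, X q →ₗ[k] Y q) : inclNM s t (dMap k s t Nm Mm g) ∈ 𝓓 :=
  ⟨_, dMap_bExt_inl_comp_snd s t Mm Nm e g⟩

theorem inclMM_dMap_mem (g : ∀ q, Y q →ₗ[k] Y q) :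
    inclMM s t (dMap k s t Mm Mm g) ∈ 𝓕₁ ⊔ 𝓓 := by
  rw [eq_sub_of_add_eq (dMap_bExt_inl_comp_fst s t Mm Nm e g).symm]
  exact sub_mem (mem_sup_right ⟨_, rfl⟩) (mem_sup_left ⟨_, rfl⟩)

theorem inclNN_dMap_mem (g : ∀ q, X q →ₗ[k] X q) :
    inclNN s t (dMap k s t Nm Nm g) ∈ 𝓕₁ ⊔ 𝓓 := by
  rw [eq_add_of_sub_eq (dMap_bExt_inr_comp_snd s t Mm Nm e g).symm]
  exact add_mem (mem_sup_right ⟨_, rfl⟩) (mem_sup_left ⟨_, rfl⟩)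

theorem inclMN_dMap_mem (g : ∀ q, Y q →ₗ[k] X q) :
    inclMN s t (dMap k s t Mm Nm g) ∈ 𝓕₂ ⊔ 𝓓 := by
  rw [eq_sub_of_add_eq (eq_add_of_sub_eq (dMap_bExt_inr_comp_fst s t Mm Nm e g).symm)]
  have hMM : inclMM s t (fun a => e a ∘ₗ g (s a)) ∈ 𝓕₂ :=
    mem_sup_left (mem_sup_right ⟨_, rfl⟩)
  have hNN : inclNN s t (fun a => g (t a) ∘ₗ e a) ∈ 𝓕₂ := mem_sup_right ⟨_, rfl⟩
  exact sub_mem (add_mem (mem_sup_right ⟨_, rfl⟩) (mem_sup_left hMM)) (mem_sup_left hNN)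

theorem range_dMap_bExt_le_comap_projMN :
    𝓓 ≤ (range (dMap k s t Mm Nm)).comap (projMN s t) := by
  rintro _ ⟨f, rfl⟩
  rw [mem_comap, projMN_dMap_bExt]
  exact ⟨_, rfl⟩

theorem exists_subset_representsBasisMod_NM {RNM : Set (RSp k s t X Y)}
    (hRNM : ⊤ ≤ span k RNM ⊔ range (dMap k s t Nm Mm)) :
    ∃ S ⊆ inclNM s t '' RNM, RepresentsBasisMod 𝓓 𝓕₁ S :=
  exists_representsBasisMod (Set.image_subset_range _ _)
    (range_le_span_image_sup hRNM (inclNM_dMap_mem s t Mm Nm e))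

theorem exists_subset_representsBasisMod_diag {RM : Set (RSp k s t Y Y)}
    {RN : Set (RSp k s t X X)} (hRM : ⊤ ≤ span k RM ⊔ range (dMap k s t Mm Mm))
    (hRN : ⊤ ≤ span k RN ⊔ range (dMap k s t Nm Nm)) :
    ∃ S ⊆ inclMM s t '' RM ∪ inclNN s t '' RN,
      RepresentsBasisMod (𝓕₁ ⊔ 𝓓) 𝓕₂ S := by
  refine exists_representsBasisMod (Set.union_subset ?_ ?_) (sup_le (sup_le ?_ ?_) ?_)
  · rintro _ ⟨g, -, rfl⟩
    exact mem_sup_left (mem_sup_right ⟨g, rfl⟩)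
  · rintro _ ⟨g, -, rfl⟩
    exact mem_sup_right ⟨g, rfl⟩
  · exact le_sup_left.trans le_sup_right
  · refine (range_le_span_image_sup hRM (inclMM_dMap_mem s t Mm Nm e)).trans ?_
    exact sup_le_sup_right (span_mono Set.subset_union_left) _
  · refine (range_le_span_image_sup hRN (inclNN_dMap_mem s t Mm Nm e)).trans ?_
    exact sup_le_sup_right (span_mono Set.subset_union_right) _

theorem representsBasisMod_MN {RMN : Set (RSp k s t Y X)}
    (hRMN : RepresentsBasisMod (range (dMap k s t Mm Nm)) ⊤ RMN) :
    RepresentsBasisMod (𝓕₂ ⊔ 𝓓) ⊤ (inclMN s t '' RMN) := by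
  refine ⟨Set.subset_univ _, hRMN.2.1.image_mkQ_of_leftInverse (projMN_inclMN s t) ?_, ?_⟩
  · exact sup_le ((sup_range_incl_le_ker_projMN s t).trans (comap_mono bot_le))
      (range_dMap_bExt_le_comap_projMN s t Mm Nm e)
  · refine (top_le_sup_range_inclMN s t).trans (sup_le (le_sup_left.trans le_sup_right) ?_)
    exact range_le_span_image_sup hRMN.2.2 (inclMN_dMap_mem s t Mm Nm e)

end Extension

end Blocks

/-- Lemma `tree-shaped-basis`.  If `R_{X,Y} ⊆ R(X,Y)` represents a
basis of `Ext(X,Y)` for all `X,Y ∈ {M,N}`, then for each `e ∈ R(N,M)`, with `B = B(e)`,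
there are subsets `R'_M ⊆ R_M`, `R'_N ⊆ R_N`, `R'_{N,M} ⊆ R_{N,M}` such that, under the
identification `R(B,B) ≅ R(N,N) ⊕ R(N,M) ⊕ R(M,N) ⊕ R(M,M)`, the set
`R'_M ∪ R'_N ∪ R'_{N,M} ∪ R_{M,N}` represents a basis of `Ext(B,B)`. -/
theorem statement8
    (Mm : RSp k s t Y Y) (Nm : RSp k s t X X)
    (RM : Set (RSp k s t Y Y)) (RN : Set (RSp k s t X X))
    (RNM : Set (RSp k s t X Y)) (RMN : Set (RSp k s t Y X))
    (hRM : RepBasis s t Mm Mm RM) (hRN : RepBasis s t Nm Nm RN)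
    (hRNM : RepBasis s t Nm Mm RNM) (hRMN : RepBasis s t Mm Nm RMN)
    (e : RSp k s t X Y) :
    ∃ RM' ⊆ RM, ∃ RN' ⊆ RN, ∃ RNM' ⊆ RNM,
      RepBasis s t (BExt k s t Mm Nm e) (BExt k s t Mm Nm e)
        ((embMM s t '' RM') ∪ (embNN s t '' RN') ∪ (embNM s t '' RNM') ∪
          (embMN s t '' RMN)) := by
  rw [repBasis_iff_representsBasisMod] at hRM hRN hRNM hRMN
  obtain ⟨S₁, hS₁, h₁⟩ := exists_subset_representsBasisMod_NM s t Mm Nm e hRNM.2.2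
  obtain ⟨S₂, hS₂, h₂⟩ :=
    exists_subset_representsBasisMod_diag s t Mm Nm e hRM.2.2 hRN.2.2
  have h := (h₁.union (le_sup_left.trans le_sup_left) h₂).union le_top
    (representsBasisMod_MN s t Mm Nm e hRMN)
  obtain ⟨RNM', hRNM', rfl⟩ := Set.subset_image_iff.mp hS₁
  obtain ⟨RM', hRM', RN', hRN', rfl⟩ := Set.exists_subset_image_union_image hS₂
  refine ⟨RM', hRM', RN', hRN', RNM', hRNM', (repBasis_iff_representsBasisMod ..).mpr ?_⟩
  rwa [Set.union_comm (inclNM s t '' RNM')] at h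
end

section
/- Let M and N be representations of Q with End(M) = k·id, End(N) = k·id and Hom(M,N) = 0, and for each pair X,Y ∈ {M,N} let R_{X,Y} ⊆ R(X,Y) be a subset representing a basis of Ext(X,Y) (write R_X := R_{X,X}). If e ∈ R_{N,M} and B = B(e), then, under the identification R(B,B) ≅ R(N,N) ⊕ R(N,M) ⊕ R(M,N) ⊕ R(M,M) induced by B_q = M_q ⊕ N_q, the set R_B := (R_{N,M} ∖ {e}) ∪ R_M ∪ R_N ∪ R_{M,N} represents a basis of Ext(B,B). -/
open QuivRep

variable {k : Type} [Field k] {V A : Type} [Fintype V] [Fintype A] (s t : A → V)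
variable {X Y : V → Type}
  [∀ q, AddCommGroup (X q)] [∀ q, Module k (X q)] [∀ q, FiniteDimensional k (X q)]
  [∀ q, AddCommGroup (Y q)] [∀ q, Module k (Y q)] [∀ q, FiniteDimensional k (Y q)]

/-!
Write `R(B,B)` and the vertex-wise maps `⊕_q Hom(B_q, B_q)` as `2 × 2` block matrices with
respect to `B_q = M_q ⊕ N_q`. In these coordinates `d_{B,B}` is block triangular: its `(M,N)`
block is `d_{M,N}`, its diagonal blocks are `d_{M,M}` and `d_{N,N}` perturbed by composition with
`e`, and its `(N,M)` block is `g ↦ d_{N,M} g₁₂ + g₁₁ e - e g₂₂`. Solving block by block shows that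
the product of the spans of `R_M`, `R_{N,M} ∖ {e}`, `R_{M,N}` and `R_N` is a complement of the
image of `d_{B,B}`: `Hom(M,N) = 0` kills the `(M,N)` block of a homomorphism, `End = k·id` makes
the diagonal blocks scalars `c, c'`, and these leave the trace `(c - c') e` in the `(N,M)` block,
which is why exactly `e` drops out of `R_{N,M}`.
-/

theorem Submodule.linearIndepOn_mkQ_iff {R M : Type*} [Ring R] [AddCommGroup M] [Module R M]
    (K : Submodule R M) (S : Set M) :
    LinearIndepOn R K.mkQ S ↔ LinearIndepOn R id S ∧ Disjoint (span R S) K := by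
  refine ⟨fun h => ⟨h.of_comp K.mkQ, ?_⟩, fun h => ?_⟩
  · simpa using Submodule.range_ker_disjoint (v := Subtype.val) (f := K.mkQ) h
  · exact LinearIndependent.map (v := Subtype.val) (f := K.mkQ) h.1 (by simpa using h.2)

theorem Submodule.span_image_mkQ_eq_top_iff {R M : Type*} [Ring R] [AddCommGroup M]
    [Module R M] (K : Submodule R M) (S : Set M) :
    span R (K.mkQ '' S) = ⊤ ↔ K ⊔ span R S = ⊤ := by
  rw [Submodule.span_image, Submodule.map_mkQ_eq_top]

theorem Submodule.eq_zero_of_add_smul_mem {R M : Type*} [DivisionRing R] [AddCommGroup M]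
    [Module R M] {K U : Submodule R M} {e v : M} {c : R}
    (hKU : Disjoint K (U ⊔ R ∙ e)) (he : e ∉ U) (hv : v ∈ K) (hvU : v + c • e ∈ U) :
    v = 0 ∧ c = 0 := by
  have hv0 : v = 0 := by
    refine Submodule.disjoint_def.mp hKU v hv ?_
    rw [← add_sub_cancel_right v (c • e)]
    exact Submodule.sub_mem _ (Submodule.mem_sup_left hvU)
      (Submodule.mem_sup_right (Submodule.smul_mem _ _ (Submodule.mem_span_singleton_self e)))
  refine ⟨hv0, by_contra fun hc => he ?_⟩
  rw [hv0, zero_add] at hvU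
  exact (Submodule.smul_mem_iff U hc).mp hvU

namespace QuivRep

omit [Fintype V] [Fintype A] [∀ q, FiniteDimensional k (X q)] [∀ q, FiniteDimensional k (Y q)]

theorem repBasis_iff (Nm : RSp k s t X X) (Mm : RSp k s t Y Y) (S : Set (RSp k s t X Y)) :
    RepBasis s t Nm Mm S ↔
      LinearIndepOn k id S ∧
        IsCompl (LinearMap.range (dMap k s t Nm Mm)) (Submodule.span k S) := by
  rw [RepBasis, isCompl_iff, codisjoint_iff, disjoint_comm,
    ← Submodule.span_image_mkQ_eq_top_iff, ← and_assoc, ← Submodule.linearIndepOn_mkQ_iff]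
  rfl

section Differential

variable {Nm : RSp k s t X X} {Mm : RSp k s t Y Y}

theorem dMap_eq_zero_iff {f : ∀ q, X q →ₗ[k] Y q} :
    dMap k s t Nm Mm f = 0 ↔ IsRHom k s t Nm Mm f := by
  simp only [funext_iff, dMap, LinearMap.coe_mk, AddHom.coe_mk, Pi.zero_apply, sub_eq_zero]
  rfl

theorem isRHom_of_dMap_mem {U : Submodule k (RSp k s t X Y)}
    (hU : Disjoint (LinearMap.range (dMap k s t Nm Mm)) U)
    {f : ∀ q, X q →ₗ[k] Y q} (hf : dMap k s t Nm Mm f ∈ U) : IsRHom k s t Nm Mm f :=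
  (dMap_eq_zero_iff s t).mp (Submodule.disjoint_def.mp hU _ (LinearMap.mem_range_self _ f) hf)

theorem exists_dMap_add_eq {U : Submodule k (RSp k s t X Y)}
    (hU : Codisjoint (LinearMap.range (dMap k s t Nm Mm)) U) (x : RSp k s t X Y) :
    ∃ f, ∃ u ∈ U, dMap k s t Nm Mm f + u = x := by
  obtain ⟨_, ⟨f, rfl⟩, u, hu, hx⟩ := Submodule.mem_sup.mp (hU.eq_top ▸ Submodule.mem_top)
  exact ⟨f, u, hu, hx⟩

@[simp] theorem dMap_smul_id (c : k) : dMap k s t Nm Nm (fun _ => c • LinearMap.id) = 0 := by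
  ext; simp [dMap]

end Differential

section Composition

variable {Z : V → Type} [∀ q, AddCommGroup (Z q)] [∀ q, Module k (Z q)]

def homComp (g : ∀ q, Y q →ₗ[k] Z q) (r : RSp k s t X Y) : RSp k s t X Z :=
  fun a => g (t a) ∘ₗ r a

def compHom (r : RSp k s t Y Z) (g : ∀ q, X q →ₗ[k] Y q) : RSp k s t X Z :=
  fun a => r a ∘ₗ g (s a)

@[simp] theorem homComp_zero (r : RSp k s t X Y) :
    homComp s t (0 : ∀ q, Y q →ₗ[k] Z q) r = 0 := by
  ext; simp [homComp]

theorem homComp_add (g g' : ∀ q, Y q →ₗ[k] Z q) (r : RSp k s t X Y) :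
    homComp s t (g + g') r = homComp s t g r + homComp s t g' r := by
  ext; simp [homComp]

@[simp] theorem homComp_smul_id (c : k) (r : RSp k s t X Y) :
    homComp s t (fun _ => c • LinearMap.id) r = c • r := by
  ext; simp [homComp]

@[simp] theorem compHom_zero (r : RSp k s t Y Z) :
    compHom s t r (0 : ∀ q, X q →ₗ[k] Y q) = 0 := by
  ext; simp [compHom]

@[simp] theorem compHom_smul_id (c : k) (r : RSp k s t X Y) :
    compHom s t r (fun _ => c • LinearMap.id) = c • r := by
  ext; simp [compHom]

end Composition

def blockEquiv : RSp k s t (fun q => Y q × X q) (fun q => Y q × X q) ≃ₗ[k]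
    (RSp k s t Y Y × RSp k s t X Y) × (RSp k s t Y X × RSp k s t X X) where
  toFun r :=
    ((fun a => LinearMap.fst k _ _ ∘ₗ r a ∘ₗ LinearMap.inl k _ _,
      fun a => LinearMap.fst k _ _ ∘ₗ r a ∘ₗ LinearMap.inr k _ _),
     (fun a => LinearMap.snd k _ _ ∘ₗ r a ∘ₗ LinearMap.inl k _ _,
      fun a => LinearMap.snd k _ _ ∘ₗ r a ∘ₗ LinearMap.inr k _ _))
  invFun x a := ((x.1.1 a).coprod (x.1.2 a)).prod ((x.2.1 a).coprod (x.2.2 a))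
  map_add' r r' := by ext <;> simp
  map_smul' c r := by ext <;> simp
  left_inv r := by ext a v <;> simp [← map_add, ← Prod.fst_add, ← Prod.snd_add]
  right_inv x := by ext <;> simp

@[simp] theorem blockEquiv_embMM (r : RSp k s t Y Y) :
    blockEquiv s t (embMM s t (X := X) r) = ((r, 0), (0, 0)) := by
  ext <;> simp [blockEquiv, embMM]

@[simp] theorem blockEquiv_embNM (r : RSp k s t X Y) :
    blockEquiv s t (embNM s t r) = ((0, r), (0, 0)) := by
  ext <;> simp [blockEquiv, embNM]

@[simp] theorem blockEquiv_embMN (r : RSp k s t Y X) :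
    blockEquiv s t (embMN s t r) = ((0, 0), (r, 0)) := by
  ext <;> simp [blockEquiv, embMN]

@[simp] theorem blockEquiv_embNN (r : RSp k s t X X) :
    blockEquiv s t (embNN s t (Y := Y) r) = ((0, 0), (0, r)) := by
  ext <;> simp [blockEquiv, embNN]

theorem image_blockEquiv_union (SNM : Set (RSp k s t X Y)) (SMM : Set (RSp k s t Y Y))
    (SNN : Set (RSp k s t X X)) (SMN : Set (RSp k s t Y X)) :
    blockEquiv s t ''
        (embNM s t '' SNM ∪ embMM s t '' SMM ∪ embNN s t '' SNN ∪ embMN s t '' SMN) =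
      LinearMap.inl k _ _ '' (LinearMap.inl k _ _ '' SMM ∪ LinearMap.inr k _ _ '' SNM) ∪
        LinearMap.inr k _ _ '' (LinearMap.inl k _ _ '' SMN ∪ LinearMap.inr k _ _ '' SNN) := by
  simp only [Set.image_union, Set.image_image, blockEquiv_embNM, blockEquiv_embMM,
    blockEquiv_embNN, blockEquiv_embMN, LinearMap.inl_apply, LinearMap.inr_apply]
  ext
  simp only [Set.mem_union]
  tauto

/- The vertex-wise maps `∀ q, B_q →ₗ B_q` are `RSp` of the quiver with one loop at each vertex,
so `blockEquiv id id` splits them into blocks as well. -/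
def dBlock (Mm : RSp k s t Y Y) (Nm : RSp k s t X X) (e : RSp k s t X Y) :
    ((∀ q, Y q →ₗ[k] Y q) × (∀ q, X q →ₗ[k] Y q)) ×
        ((∀ q, Y q →ₗ[k] X q) × (∀ q, X q →ₗ[k] X q)) →ₗ[k]
      (RSp k s t Y Y × RSp k s t X Y) × (RSp k s t Y X × RSp k s t X X) :=
  (blockEquiv s t).toLinearMap ∘ₗ dMap k s t (BExt k s t Mm Nm e) (BExt k s t Mm Nm e) ∘ₗ
    (blockEquiv (k := k) (id : V → V) id).symm.toLinearMap

section BlockDifferential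

variable (Mm : RSp k s t Y Y) (Nm : RSp k s t X X) (e : RSp k s t X Y)

theorem dBlock_apply
    (g : ((∀ q, Y q →ₗ[k] Y q) × (∀ q, X q →ₗ[k] Y q)) ×
      ((∀ q, Y q →ₗ[k] X q) × (∀ q, X q →ₗ[k] X q))) :
    dBlock s t Mm Nm e g =
      ((dMap k s t Mm Mm g.1.1 - compHom s t e g.2.1,
        dMap k s t Nm Mm g.1.2 + homComp s t g.1.1 e - compHom s t e g.2.2),
       (dMap k s t Mm Nm g.2.1, dMap k s t Nm Nm g.2.2 + homComp s t g.2.1 e)) := by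
  ext <;> simp [dBlock, blockEquiv, dMap, BExt, homComp, compHom] <;> abel

theorem range_dBlock :
    LinearMap.range (dBlock s t Mm Nm e) =
      (LinearMap.range (dMap k s t (BExt k s t Mm Nm e) (BExt k s t Mm Nm e))).map
        (blockEquiv s t).toLinearMap := by
  rw [dBlock, LinearMap.range_comp, LinearMap.range_comp_of_range_eq_top _ (LinearEquiv.range _)]

variable {UMM : Submodule k (RSp k s t Y Y)} {UNM : Submodule k (RSp k s t X Y)}
  {UMN : Submodule k (RSp k s t Y X)} {UNN : Submodule k (RSp k s t X X)}

theorem disjoint_range_dBlock (hEndM : EndTrivial k s t Mm) (hEndN : EndTrivial k s t Nm)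
    (hHom : HomZero k s t Mm Nm)
    (hMM : Disjoint (LinearMap.range (dMap k s t Mm Mm)) UMM)
    (hNM : Disjoint (LinearMap.range (dMap k s t Nm Mm)) (UNM ⊔ k ∙ e))
    (hMN : Disjoint (LinearMap.range (dMap k s t Mm Nm)) UMN)
    (hNN : Disjoint (LinearMap.range (dMap k s t Nm Nm)) UNN) (he : e ∉ UNM) :
    Disjoint (LinearMap.range (dBlock s t Mm Nm e)) ((UMM.prod UNM).prod (UMN.prod UNN)) := by
  rw [Submodule.disjoint_def]
  rintro _ ⟨⟨⟨g11, g12⟩, g21, g22⟩, rfl⟩ hU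
  simp only [dBlock_apply, Submodule.mem_prod] at hU ⊢
  obtain ⟨⟨h11, h12⟩, h21, h22⟩ := hU
  obtain rfl : g21 = 0 := hHom g21 (isRHom_of_dMap_mem s t hMN h21)
  simp only [compHom_zero, homComp_zero, sub_zero, add_zero] at h11 h22
  obtain ⟨c, hc⟩ := hEndM g11 (isRHom_of_dMap_mem s t hMM h11)
  obtain ⟨c', hc'⟩ := hEndN g22 (isRHom_of_dMap_mem s t hNN h22)
  obtain rfl : g11 = fun _ => c • LinearMap.id := funext hc
  obtain rfl : g22 = fun _ => c' • LinearMap.id := funext hc'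
  rw [homComp_smul_id, compHom_smul_id, add_sub_assoc, ← sub_smul] at h12
  obtain ⟨h0, hcc⟩ :=
    Submodule.eq_zero_of_add_smul_mem hNM he (LinearMap.mem_range_self _ g12) h12
  simp [h0, sub_eq_zero.mp hcc]

theorem codisjoint_range_dBlock
    (hMM : Codisjoint (LinearMap.range (dMap k s t Mm Mm)) UMM)
    (hNM : Codisjoint (LinearMap.range (dMap k s t Nm Mm)) (UNM ⊔ k ∙ e))
    (hMN : Codisjoint (LinearMap.range (dMap k s t Mm Nm)) UMN)
    (hNN : Codisjoint (LinearMap.range (dMap k s t Nm Nm)) UNN) :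
    Codisjoint (LinearMap.range (dBlock s t Mm Nm e)) ((UMM.prod UNM).prod (UMN.prod UNN)) := by
  rw [codisjoint_iff, eq_top_iff]
  rintro ⟨⟨x11, x12⟩, x21, x22⟩ -
  obtain ⟨g21, u21, hu21, rfl⟩ := exists_dMap_add_eq s t hMN x21
  obtain ⟨g11, u11, hu11, h11⟩ := exists_dMap_add_eq s t hMM (x11 + compHom s t e g21)
  obtain ⟨g22, u22, hu22, h22⟩ := exists_dMap_add_eq s t hNN (x22 - homComp s t g21 e)
  obtain ⟨g12, w, hw, h12⟩ :=
    exists_dMap_add_eq s t hNM (x12 - homComp s t g11 e + compHom s t e g22)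
  obtain ⟨u12, hu12, _, hce, rfl⟩ := Submodule.mem_sup.mp hw
  obtain ⟨c, rfl⟩ := Submodule.mem_span_singleton.mp hce
  -- the `k e` part of `w` is absorbed by adding `c • id` to the `(M,M)` block
  refine Submodule.mem_sup.mpr
    ⟨_, LinearMap.mem_range_self _ ((g11 + fun _ => c • LinearMap.id, g12), g21, g22),
      ((u11, u12), u21, u22), ⟨⟨hu11, hu12⟩, hu21, hu22⟩, ?_⟩
  have hx12 : x12 = dMap k s t Nm Mm g12 + (u12 + c • e) + homComp s t g11 e -
      compHom s t e g22 := by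
    rw [h12]; abel
  rw [eq_sub_of_add_eq h11.symm, eq_add_of_sub_eq h22.symm, hx12]
  refine Prod.ext (Prod.ext ?_ ?_) (Prod.ext ?_ ?_) <;>
    simp only [dBlock_apply, map_add, homComp_add, dMap_smul_id, homComp_smul_id, Prod.fst_add,
      Prod.snd_add] <;> abel

theorem isCompl_range_dBlock (hEndM : EndTrivial k s t Mm) (hEndN : EndTrivial k s t Nm)
    (hHom : HomZero k s t Mm Nm)
    (hMM : IsCompl (LinearMap.range (dMap k s t Mm Mm)) UMM)
    (hNM : IsCompl (LinearMap.range (dMap k s t Nm Mm)) (UNM ⊔ k ∙ e))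
    (hMN : IsCompl (LinearMap.range (dMap k s t Mm Nm)) UMN)
    (hNN : IsCompl (LinearMap.range (dMap k s t Nm Nm)) UNN) (he : e ∉ UNM) :
    IsCompl (LinearMap.range (dBlock s t Mm Nm e)) ((UMM.prod UNM).prod (UMN.prod UNN)) :=
  ⟨disjoint_range_dBlock s t Mm Nm e hEndM hEndN hHom hMM.1 hNM.1 hMN.1 hNN.1 he,
    codisjoint_range_dBlock s t Mm Nm e hMM.2 hNM.2 hMN.2 hNN.2⟩

end BlockDifferential

end QuivRep

/-- Corollary `extbasis`.  Let `M`, `N` be Schurian with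
`Hom(M,N) = 0`, and let `R_{X,Y} ⊆ R(X,Y)` represent bases of `Ext(X,Y)` for
`X,Y ∈ {M,N}`.  If `e ∈ R_{N,M}` and `B = B(e)`, then under the identification
`R(B,B) ≅ R(N,N) ⊕ R(N,M) ⊕ R(M,N) ⊕ R(M,M)`, the set
`R_B := (R_{N,M} ∖ {e}) ∪ R_M ∪ R_N ∪ R_{M,N}` represents a basis of `Ext(B,B)`. -/
theorem statement9
    (Mm : RSp k s t Y Y) (Nm : RSp k s t X X)
    (hEndM : EndTrivial k s t Mm) (hEndN : EndTrivial k s t Nm)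
    (hHomMN : HomZero k s t Mm Nm)
    (RM : Set (RSp k s t Y Y)) (RN : Set (RSp k s t X X))
    (RNM : Set (RSp k s t X Y)) (RMN : Set (RSp k s t Y X))
    (hRM : RepBasis s t Mm Mm RM) (hRN : RepBasis s t Nm Nm RN)
    (hRNM : RepBasis s t Nm Mm RNM) (hRMN : RepBasis s t Mm Nm RMN)
    (e : RSp k s t X Y) (he : e ∈ RNM) :
    RepBasis s t (BExt k s t Mm Nm e) (BExt k s t Mm Nm e)
      ((embNM s t '' (RNM \ {e})) ∪ (embMM s t '' RM) ∪ (embNN s t '' RN) ∪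
        (embMN s t '' RMN)) := by
  rw [repBasis_iff] at hRM hRN hRNM hRMN ⊢
  have he_span : e ∉ Submodule.span k (RNM \ {e}) := by
    simpa using linearIndepOn_iff_notMem_span.mp hRNM.1 e he
  have hspan_NM : Submodule.span k (RNM \ {e}) ⊔ k ∙ e = Submodule.span k RNM := by
    rw [sup_comm, ← Submodule.span_insert, Set.insert_sdiff_singleton, Set.insert_eq_of_mem he]
  have himage := image_blockEquiv_union s t (RNM \ {e}) RM RN RMN
  refine ⟨LinearIndepOn.of_comp (blockEquiv s t).toLinearMap
    ((linearIndepOn_iff_image (blockEquiv s t).injective.injOn).mpr ?_), ?_⟩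
  · rw [himage]
    exact (hRM.1.inl_union_inr (hRNM.1.mono Set.sdiff_subset)).inl_union_inr
      (hRMN.1.inl_union_inr hRN.1)
  · rw [(Submodule.orderIsoMapComap (blockEquiv s t)).isCompl_iff]
    simp only [Submodule.orderIsoMapComap_apply, ← range_dBlock, ← Submodule.span_image,
      LinearEquiv.coe_coe, himage, LinearMap.span_inl_union_inr]
    rw [← hspan_NM] at hRNM
    exact isCompl_range_dBlock s t Mm Nm e hEndM hEndN hHomMN hRM.2 hRNM.2 hRMN.2 hRN.2 he_span
end

section
/- Fix Θ ∈ ℤ^{Q_0} and define the slope μ(M) := (Σ_q Θ_q · dim M_q)/(Σ_q dim M_q) for nonzero representations M of Q. Let M be a nonzero representation of Q and let U ⊆ M be a nonzero subrepresentation such that μ(U) ≥ μ(W) for every nonzero subrepresentation W ⊆ M, and such that among the nonzero subrepresentations of maximal slope, U has maximal total dimension (i.e. U = scss(M)). Then Hom(U, M/U) = 0. -/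
open QuivRep

variable {k : Type} [Field k] {V A : Type} [Fintype V] [Fintype A] (s t : A → V)
variable {X : V → Type}
  [∀ q, AddCommGroup (X q)] [∀ q, Module k (X q)] [∀ q, FiniteDimensional k (X q)]

/-- The slope `μ(U) = (Σ_q Θ_q · dim U_q)/(Σ_q dim U_q)` of a family of submodules. -/
noncomputable def slopeSub (Θ : V → ℤ) (U : ∀ q, Submodule k (X q)) : ℚ :=
  (∑ q, (Θ q : ℚ) * (Module.finrank k (U q) : ℚ)) /
    (∑ q, (Module.finrank k (U q) : ℚ))

/-- The total dimension of a family of submodules. -/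
noncomputable def totalDim (U : ∀ q, Submodule k (X q)) : ℕ :=
  ∑ q, Module.finrank k (U q)

/-- The subrepresentation structure on a stable family of submodules. -/
def subRep (Mm : RSp k s t X X) (U : ∀ q, Submodule k (X q))
    (hU : IsSubRep k s t Mm U) :
    RSp k s t (fun q => ↥(U q)) (fun q => ↥(U q)) :=
  fun a => (Mm a).restrict (hU a)

/-- The quotient representation `M/U`. -/
def quotRep (Mm : RSp k s t X X) (U : ∀ q, Submodule k (X q))
    (hU : IsSubRep k s t Mm U) :
    RSp k s t (fun q => X q ⧸ U q) (fun q => X q ⧸ U q) :=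
  fun a => Submodule.mapQ (U (s a)) (U (t a)) (Mm a) (fun x hx => hU a x hx)

/-- Lemma `scss`.  If `U = scss(M)` — i.e. `U` is a nonzero
subrepresentation of maximal slope, of maximal total dimension among the nonzero
subrepresentations of maximal slope — then `Hom(U, M/U) = 0`. -/
theorem statement12 (Θ : V → ℤ) (Mm : RSp k s t X X)
    (U : ∀ q, Submodule k (X q)) (hU : IsSubRep k s t Mm U)
    (hM : ∃ q, ∃ x : X q, x ≠ 0)
    (hUne : ∃ q, U q ≠ ⊥)
    (hmax : ∀ W : ∀ q, Submodule k (X q), IsSubRep k s t Mm W → (∃ q, W q ≠ ⊥) →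
      slopeSub Θ W ≤ slopeSub Θ U)
    (hdim : ∀ W : ∀ q, Submodule k (X q), IsSubRep k s t Mm W → (∃ q, W q ≠ ⊥) →
      slopeSub Θ W = slopeSub Θ U → totalDim W ≤ totalDim U)
    (f : ∀ q, ↥(U q) →ₗ[k] (X q ⧸ U q))
    (hf : IsRHom k s t (subRep s t Mm U hU) (quotRep s t Mm U hU) f) :
    f = 0 := by
  -- Notation
  classical
  set R : ∀ q, Submodule k (X q ⧸ U q) := fun q => LinearMap.range (f q) with hR
  set W : ∀ q, Submodule k (X q) := fun q => (R q).comap (U q).mkQ with hWdef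
  set Kf : ∀ q, Submodule k (X q) := fun q => (LinearMap.ker (f q)).map (U q).subtype with hKdef
  have hUW : ∀ q, U q ≤ W q := by
    intro q x hx
    show (U q).mkQ x ∈ R q
    have : (U q).mkQ x = 0 := by
      simpa [Submodule.mkQ_apply, Submodule.Quotient.mk_eq_zero] using hx
    rw [this]; exact Submodule.zero_mem _
  -- W is a subrepresentation
  have hWsub : IsSubRep k s t Mm W := by
    intro a x hx
    obtain ⟨u, hu⟩ := hx
    show (U (t a)).mkQ (Mm a x) ∈ R (t a)
    refine ⟨(subRep s t Mm U hU a) u, ?_⟩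
    have h1 : f (t a) ((subRep s t Mm U hU a) u)
        = (quotRep s t Mm U hU a) (f (s a) u) := by
      have := congrArg (fun g => g u) (hf a); simpa using this
    rw [h1, hu]
    show (quotRep s t Mm U hU a) (Submodule.Quotient.mk x) = Submodule.Quotient.mk (Mm a x)
    exact Submodule.mapQ_apply _ _ _ x
  -- Kf is a subrepresentation
  have hKsub : IsSubRep k s t Mm Kf := by
    intro a x hx
    obtain ⟨u, hu, hux⟩ := hx
    refine ⟨(subRep s t Mm U hU a) u, ?_, ?_⟩
    · have h1 : f (t a) ((subRep s t Mm U hU a) u)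
          = (quotRep s t Mm U hU a) (f (s a) u) := by
        have := congrArg (fun g => g u) (hf a); simpa using this
      have hu0 : f (s a) u = 0 := hu
      simp [LinearMap.mem_ker, h1, hu0]
    · show ((Mm a).restrict (hU a) u : X (t a)) = Mm a x
      simp only [LinearMap.restrict_coe_apply]
      exact congrArg (Mm a) hux
  -- dimension identities
  have hdimW : ∀ q, Module.finrank k (W q)
      = Module.finrank k (U q) + Module.finrank k (R q) := by
    intro q
    set g : ↥(W q) →ₗ[k] X q ⧸ U q := ((U q).mkQ).comp (W q).subtype with hg
    have hrange : LinearMap.range g = R q := by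
      rw [hg, LinearMap.range_comp, Submodule.range_subtype]
      exact Submodule.map_comap_eq_of_surjective (Submodule.mkQ_surjective _) _
    have hker : LinearMap.ker g = Submodule.comap (W q).subtype (U q) := by
      rw [hg, LinearMap.ker_comp, Submodule.ker_mkQ]
    have h1 := LinearMap.finrank_range_add_finrank_ker g
    rw [hrange, hker] at h1
    have h2 : Module.finrank k (Submodule.comap (W q).subtype (U q))
        = Module.finrank k (U q) :=
      LinearEquiv.finrank_eq (Submodule.comapSubtypeEquivOfLe (hUW q))
    omega
  have hdimU : ∀ q, Module.finrank k (R q) + Module.finrank k (Kf q)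
      = Module.finrank k (U q) := by
    intro q
    have h1 : Module.finrank k (R q) + Module.finrank k (LinearMap.ker (f q))
        = Module.finrank k (U q) := LinearMap.finrank_range_add_finrank_ker (f q)
    have h2 : Module.finrank k (Kf q) = Module.finrank k (LinearMap.ker (f q)) :=
      (LinearEquiv.finrank_eq
        (Submodule.equivMapOfInjective (U q).subtype
          (Submodule.injective_subtype _) (LinearMap.ker (f q)))).symm
    omega
  -- rational sums
  set dU : ℚ := ∑ q, (Module.finrank k (U q) : ℚ) with hdU
  set dR : ℚ := ∑ q, (Module.finrank k (R q) : ℚ) with hdR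
  set dK : ℚ := ∑ q, (Module.finrank k (Kf q) : ℚ) with hdK
  set tU : ℚ := ∑ q, (Θ q : ℚ) * (Module.finrank k (U q) : ℚ) with htU
  set tR : ℚ := ∑ q, (Θ q : ℚ) * (Module.finrank k (R q) : ℚ) with htR
  set tK : ℚ := ∑ q, (Θ q : ℚ) * (Module.finrank k (Kf q) : ℚ) with htK
  have hcastU : ∀ q, (Module.finrank k (U q) : ℚ)
      = (Module.finrank k (R q) : ℚ) + (Module.finrank k (Kf q) : ℚ) := fun q => by
    exact_mod_cast (hdimU q).symm
  have hcastW : ∀ q, (Module.finrank k (W q) : ℚ)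
      = (Module.finrank k (U q) : ℚ) + (Module.finrank k (R q) : ℚ) := fun q => by
    exact_mod_cast hdimW q
  have hsplitd : dU = dR + dK := by
    rw [hdU, hdR, hdK, ← Finset.sum_add_distrib]
    exact Finset.sum_congr rfl fun q _ => hcastU q
  have hsplitt : tU = tR + tK := by
    rw [htU, htR, htK, ← Finset.sum_add_distrib]
    exact Finset.sum_congr rfl fun q _ => by rw [← mul_add, hcastU q]
  have hWd : (∑ q, (Module.finrank k (W q) : ℚ)) = dU + dR := by
    rw [hdU, hdR, ← Finset.sum_add_distrib]
    exact Finset.sum_congr rfl fun q _ => hcastW q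
  have hWt : (∑ q, (Θ q : ℚ) * (Module.finrank k (W q) : ℚ)) = tU + tR := by
    rw [htU, htR, ← Finset.sum_add_distrib]
    exact Finset.sum_congr rfl fun q _ => by rw [← mul_add, hcastW q]
  -- positivity
  have hdUpos : 0 < dU := by
    obtain ⟨q0, hq0⟩ := hUne
    refine Finset.sum_pos' (fun q _ => by positivity) ⟨q0, Finset.mem_univ _, ?_⟩
    have : Module.finrank k (U q0) ≠ 0 := fun h => hq0 (Submodule.finrank_eq_zero.mp h)
    exact_mod_cast Nat.pos_of_ne_zero this
  have hdRnn : 0 ≤ dR := Finset.sum_nonneg fun q _ => by positivity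
  have hdKnn : 0 ≤ dK := Finset.sum_nonneg fun q _ => by positivity
  -- key inequality for the kernel
  have hKkey : tK * dU ≤ tU * dK := by
    by_cases hKne : ∃ q, Kf q ≠ ⊥
    · have hmx := hmax Kf hKsub hKne
      have hdKpos : 0 < dK := by
        obtain ⟨q0, hq0⟩ := hKne
        refine Finset.sum_pos' (fun q _ => by positivity) ⟨q0, Finset.mem_univ _, ?_⟩
        have : Module.finrank k (Kf q0) ≠ 0 := fun h => hq0 (Submodule.finrank_eq_zero.mp h)
        exact_mod_cast Nat.pos_of_ne_zero this
      have : tK / dK ≤ tU / dU := hmx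
      exact (div_le_div_iff₀ hdKpos hdUpos).mp this
    · push_neg at hKne
      have hz : ∀ q, Module.finrank k (Kf q) = 0 := fun q =>
        Submodule.finrank_eq_zero.mpr (hKne q)
      have htK0 : tK = 0 := by
        rw [htK]; refine Finset.sum_eq_zero fun q _ => by rw [hz q]; norm_num
      have hdK0 : dK = 0 := by
        rw [hdK]; refine Finset.sum_eq_zero fun q _ => by rw [hz q]; norm_num
      rw [htK0, hdK0]; simp
  -- W is nonzero
  have hWne : ∃ q, W q ≠ ⊥ := by
    obtain ⟨q0, hq0⟩ := hUne
    exact ⟨q0, fun h => hq0 (le_bot_iff.mp (h ▸ hUW q0))⟩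
  -- slope of W equals slope of U
  have hWle : (tU + tR) * dU ≤ tU * (dU + dR) := by
    have := hmax W hWsub hWne
    unfold slopeSub at this
    rw [hWd, hWt] at this
    have hdWpos : 0 < dU + dR := by linarith
    exact (div_le_div_iff₀ hdWpos hdUpos).mp this
  have hWge : tU * (dU + dR) ≤ (tU + tR) * dU := by
    have hdR' : dR = dU - dK := by linarith
    have htR' : tR = tU - tK := by linarith
    have e1 : tU * dR = tU * dU - tU * dK := by rw [hdR']; ring
    have e2 : tR * dU = tU * dU - tK * dU := by rw [htR']; ring
    have h1 : tU * dR ≤ tR * dU := by linarith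
    have e3 : tU * (dU + dR) = tU * dU + tU * dR := by ring
    have e4 : (tU + tR) * dU = tU * dU + tR * dU := by ring
    linarith
  have hWeq : slopeSub Θ W = slopeSub Θ U := by
    unfold slopeSub
    rw [hWd, hWt]
    rw [div_eq_div_iff (by linarith : (0:ℚ) < dU + dR).ne' hdUpos.ne']
    linarith
  -- conclude dR = 0
  have hdims := hdim W hWsub hWne hWeq
  have hWUdim : totalDim W = totalDim U + ∑ q, Module.finrank k (R q) := by
    unfold totalDim
    rw [← Finset.sum_add_distrib]
    exact Finset.sum_congr rfl fun q _ => hdimW q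
  have hRzero : ∀ q, Module.finrank k (R q) = 0 := by
    have hsum0 : (∑ q, Module.finrank k (R q)) = 0 := by omega
    intro q
    exact (Finset.sum_eq_zero_iff.mp hsum0) q (Finset.mem_univ q)
  funext q
  have : R q = ⊥ := Submodule.finrank_eq_zero.mp (hRzero q)
  exact LinearMap.range_eq_bot.mp this
end
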